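/- arXiv:math/0005067 — 3 statements merged into one kernel-verified Lean document; each statement's English description precedes it below -/
import Mathlib

section
/- Let (Ω,T) be a strictly ergodic (i.e. minimal and uniquely ergodic) subshift over a finite alphabet A with associated set of words W, and let B be a Banach space. Then for every additive function F: W → B the limit lim_{|w|→∞} F(w)/|w| exists, i.e. there is x ∈ B such that for every ε > 0 there is L with ‖F(w)/|w| − x‖ ≤ ε for all w ∈ W with |w| ≥ L. -/
/-!
Fix a block length `n`. Cutting a word `w` into consecutive blocks of length `n` that start at an
offset `s < n`, additivity gives `F w ≈ ∑ F (blocks)` up to `c n * |w| + O(n)`. Averaging over the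
`n` offsets, `n • F w` is approximated by the sum of `F` over all length-`n` factors of `w`, that is
by `∑_{|v| = n} ♯_v(w) • F v`. By unique ergodicity `♯_v(w) / |w| → ν v`, so `F w / |w|` is
eventually within `c n + δ` of `n⁻¹ • ∑_{|v| = n} ν v • F v`. As `c n → 0`, `F w / |w|` is uniformly
Cauchy when `|w| → ∞`, hence converges in the Banach space `B`.
-/

open Filter Topology

namespace SubshiftErgodic

variable {A : Type*}

/-- The shift map `T` on two-sided sequences over `A`: `(T ω) n = ω (n+1)`. -/
def shift (ω : ℤ → A) : ℤ → A := fun n => ω (n + 1)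

/-- The `n`-th power of the shift: `(shiftZ n ω) k = ω (k + n)`. -/
def shiftZ (n : ℤ) (ω : ℤ → A) : ℤ → A := fun k => ω (k + n)

/-- `Ω` is a subshift: a closed, shift-invariant subset of `A^ℤ`. -/
def IsSubshift [TopologicalSpace A] (Ω : Set (ℤ → A)) : Prop :=
  IsClosed Ω ∧ shift '' Ω = Ω

/-- Minimality: every orbit `{T^n ω : n ∈ ℤ}` is dense in `Ω`. -/
def IsMinimal [TopologicalSpace A] (Ω : Set (ℤ → A)) : Prop :=
  ∀ ω ∈ Ω, Ω ⊆ closure {ρ | ∃ n : ℤ, ρ = shiftZ n ω}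

/-- The finite word `w` occurs in the sequence `ω` at position `k`. -/
def OccursAt (w : List A) (ω : ℤ → A) (k : ℤ) : Prop :=
  ∀ i : Fin w.length, ω (k + (i : ℕ)) = w.get i

/-- The set `W = W(Ω)` of finite words occurring as factors of elements of `Ω`. -/
def words (Ω : Set (ℤ → A)) : Set (List A) :=
  {w | ∃ ω ∈ Ω, ∃ k : ℤ, OccursAt w ω k}

/-- `v` occurs as a factor of the finite word `w` at position `i`. -/
def OccursIn (v w : List A) (i : ℕ) : Prop :=
  i + v.length ≤ w.length ∧ v <+: w.drop i

/-- `♯_v(w)`: the number of occurrences of `v` as a factor of `w`. -/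
noncomputable def occ (v w : List A) : ℕ :=
  {i : ℕ | OccursIn v w i}.ncard

/-- `z` is a return word of `u` (relative to the set of words `W`). -/
def IsReturnWord (W : Set (List A)) (z u : List A) : Prop :=
  z ∈ W ∧ z ++ u ∈ W ∧ occ u (z ++ u) = 2 ∧ u <+: z ++ u

/-- The maximal number of pairwise disjoint occurrences of `v` as a factor of `w`. -/
noncomputable def maxDisjoint (v w : List A) : ℕ :=
  sSup {m : ℕ | ∃ s : Fin m → ℕ, (∀ i, OccursIn v w (s i)) ∧
    ∀ i j : Fin m, i < j → s i + v.length ≤ s j}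

/-- The filter expressing `|w| → ∞` along words `w ∈ W`. -/
def wordsFilter (W : Set (List A)) : Filter (List A) :=
  ⨅ L : ℕ, Filter.principal {w | w ∈ W ∧ L ≤ w.length}

/-- `lim_{|w| → ∞} g w = x` over `w ∈ W`: for every `ε > 0` there is `L` with
`‖g w - x‖ ≤ ε` for all `w ∈ W` with `|w| ≥ L`. -/
def TendstoWords {B : Type*} [SeminormedAddCommGroup B] (W : Set (List A))
    (g : List A → B) (x : B) : Prop :=
  ∀ ε : ℝ, 0 < ε → ∃ L : ℕ, ∀ w ∈ W, L ≤ w.length → ‖g w - x‖ ≤ ε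

/-- `liminf_{|w| → ∞} g w` over `w ∈ W`, valued in the extended reals. -/
noncomputable def liminfWords (W : Set (List A)) (g : List A → ℝ) : EReal :=
  Filter.liminf (fun w => (g w : EReal)) (wordsFilter W)

/-- `limsup_{|w| → ∞} g w` over `w ∈ W`, valued in the extended reals. -/
noncomputable def limsupWords (W : Set (List A)) (g : List A → ℝ) : EReal :=
  Filter.limsup (fun w => (g w : EReal)) (wordsFilter W)

/-- `ν(v) = liminf_{|w| → ∞} l_v(w)/|w|`, where
`l_v(w) = (max number of pairwise disjoint copies of v in w) ⬝ |v|`. -/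
noncomputable def nu (W : Set (List A)) (v : List A) : EReal :=
  liminfWords W (fun w => ((maxDisjoint v w * v.length : ℕ) : ℝ) / (w.length : ℝ))

/-- Condition (PQ): uniform positivity of quasiweights. -/
def PQ (W : Set (List A)) : Prop :=
  ∃ C : ℝ, 0 < C ∧ ∀ v ∈ W, v ≠ [] → (C : EReal) ≤ nu W v

/-- Unique ergodicity: all word frequencies `♯_v(w)/|w|` converge as `|w| → ∞`. -/
def UniquelyErgodic (Ω : Set (ℤ → A)) : Prop :=
  ∀ v ∈ words Ω, ∃ x : ℝ,
    TendstoWords (words Ω) (fun w => (occ v w : ℝ) / (w.length : ℝ)) x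

/-- `F : W → ℝ` is subadditive. -/
def IsSubadditive (W : Set (List A)) (F : List A → ℝ) : Prop :=
  ∀ a b : List A, a ∈ W → b ∈ W → a ++ b ∈ W → F (a ++ b) ≤ F a + F b

/-- `F^(n) = max { F v / |v| : v ∈ W, |v| = n }`. -/
noncomputable def wordSup (W : Set (List A)) (F : List A → ℝ) (n : ℕ) : ℝ :=
  sSup ((fun v => F v / (v.length : ℝ)) '' {v | v ∈ W ∧ v.length = n})

/-- Condition (SET): the uniform subadditive ergodic theorem holds, i.e. for every
subadditive `F` the limit `lim_{|w|→∞} F(w)/|w|` exists and equals `inf_{n ≥ 1} F^(n)`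
(in the extended reals). -/
def SET (W : Set (List A)) : Prop :=
  ∀ F : List A → ℝ, IsSubadditive W F →
    Filter.Tendsto (fun w => ((F w / (w.length : ℝ) : ℝ) : EReal)) (wordsFilter W)
      (nhds (⨅ n : {n : ℕ // 1 ≤ n}, ((wordSup W F n.1 : ℝ) : EReal)))

/-- A Banach-space-valued function `F : W → B` is additive. -/
def IsAdditive {B : Type*} [SeminormedAddCommGroup B] (W : Set (List A))
    (F : List A → B) : Prop :=
  ∃ D : ℝ, 0 < D ∧ ∃ c : ℕ → ℝ, Antitone c ∧ (∀ n, 0 ≤ c n) ∧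
    Filter.Tendsto c Filter.atTop (nhds 0) ∧
    (∀ vs : List (List A), (∀ v ∈ vs, v ∈ W) → vs.flatten ∈ W →
      ‖F vs.flatten - (vs.map F).sum‖ ≤ (vs.map fun v => c v.length * (v.length : ℝ)).sum) ∧
    ∀ v ∈ W, ‖F v‖ ≤ D * (v.length : ℝ)

/-- Condition (HP): powers in `W` have uniformly bounded exponent. -/
def HP (W : Set (List A)) : Prop :=
  ∃ N : ℕ, 0 < N ∧ ∀ v : List A, v ≠ [] → ∀ k : ℕ,
    (List.replicate k v).flatten ∈ W → k ≤ N

/-- Condition (PW): uniform positivity of weights. -/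
def PW (W : Set (List A)) : Prop :=
  ∃ E : ℝ, 0 < E ∧ ∀ v ∈ W, v ≠ [] →
    (E : EReal) ≤ liminfWords W (fun w => ((occ v w * v.length : ℕ) : ℝ) / (w.length : ℝ))

/-- Linear repetitivity. -/
def LinearlyRepetitive (W : Set (List A)) : Prop :=
  ∃ D : ℝ, 0 < D ∧ ∀ v ∈ W, v ≠ [] → ∀ w ∈ W, D * (v.length : ℝ) ≤ (w.length : ℝ) →
    v <:+: w

/-- Aperiodicity: no element of `Ω` is periodic. -/
def Aperiodic (Ω : Set (ℤ → A)) : Prop :=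
  ∀ ω ∈ Ω, ∀ p : ℕ, 1 ≤ p → shiftZ (p : ℤ) ω ≠ ω

/-- `m(n)`: the minimal length of a return word of a word of length `n` in `W`. -/
noncomputable def mRet (W : Set (List A)) (n : ℕ) : ℕ :=
  sInf {k : ℕ | ∃ v z : List A, v ∈ W ∧ v.length = n ∧ IsReturnWord W z v ∧ z.length = k}

/-- `k_ω^w`: the minimal nonnegative position at which `w` occurs in `ω`. -/
noncomputable def firstOcc (ω : ℤ → A) (w : List A) : ℕ :=
  sInf {k : ℕ | OccursAt w ω (k : ℤ)}

/-- `F_ω(w) = ∑_{j=0}^{|w|-1} f(T^{k_ω^w + j} ω)`. -/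
noncomputable def birkhoffF {B : Type*} [AddCommMonoid B] (f : (ℤ → A) → B)
    (ω : ℤ → A) (w : List A) : B :=
  ∑ j ∈ Finset.range w.length, f (shiftZ ((firstOcc ω w : ℤ) + (j : ℤ)) ω)

def IsFactorial (W : Set (List A)) : Prop :=
  ∀ ⦃u w : List A⦄, u <:+: w → w ∈ W → u ∈ W

theorem isFactorial_words (Ω : Set (ℤ → A)) : IsFactorial (words Ω) := by
  rintro u _ ⟨s, t, rfl⟩ ⟨ω, hω, k, hk⟩
  refine ⟨ω, hω, k + s.length, fun i => ?_⟩
  have h := hk ⟨s.length + i, by simp only [List.length_append]; omega⟩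
  simp only [List.get_eq_getElem, List.append_assoc, Nat.cast_add] at h
  rw [List.getElem_append_right (by omega), List.getElem_append_left (by simp)] at h
  simpa [add_assoc] using h

theorem IsFactorial.drop_take_mem {W : Set (List A)} (hW : IsFactorial W) {w : List A}
    (hw : w ∈ W) (j m : ℕ) : (w.drop j).take m ∈ W :=
  hW ((List.take_prefix _ _).isInfix.trans (List.drop_suffix _ _).isInfix) hw

theorem hasBasis_wordsFilter (W : Set (List A)) :
    (wordsFilter W).HasBasis (fun _ => True) fun L => {w | w ∈ W ∧ L ≤ w.length} :=
  Filter.hasBasis_iInf_principal <| Antitone.directed_ge fun _ _ hLM _ hw =>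
    ⟨hw.1, hLM.trans hw.2⟩

theorem eventually_mem_wordsFilter (W : Set (List A)) (L : ℕ) :
    ∀ᶠ w in wordsFilter W, w ∈ W ∧ L ≤ w.length :=
  (hasBasis_wordsFilter W).mem_of_mem trivial

theorem tendsto_length_wordsFilter (W : Set (List A)) :
    Tendsto List.length (wordsFilter W) atTop :=
  tendsto_atTop.2 fun L => (eventually_mem_wordsFilter W L).mono fun _ hw => hw.2

theorem tendstoWords_iff {B : Type*} [SeminormedAddCommGroup B] {W : Set (List A)}
    {g : List A → B} {x : B} :
    TendstoWords W g x ↔ Tendsto g (wordsFilter W) (𝓝 x) := by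
  simp only [(hasBasis_wordsFilter W).tendsto_iff Metric.nhds_basis_closedBall, TendstoWords,
    mem_closedBall_iff_norm, Set.mem_ofPred_eq, true_and, and_imp]

theorem exists_tendsto_of_forall_eventually_norm_sub_le {ι B : Type*} [NormedAddCommGroup B]
    [CompleteSpace B] {f : Filter ι} {g : ι → B}
    (h : ∀ ε > 0, ∃ y, ∀ᶠ i in f, ‖g i - y‖ ≤ ε) : ∃ x, Tendsto g f (𝓝 x) := by
  rcases f.eq_or_neBot with rfl | hf
  · exact ⟨0, tendsto_bot⟩
  refine CompleteSpace.complete (Metric.cauchy_iff.2 ⟨inferInstance, fun ε hε => ?_⟩)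
  obtain ⟨y, hy⟩ := h (ε / 3) (by positivity)
  refine ⟨Metric.closedBall y (ε / 3), hy.mono fun _ => mem_closedBall_iff_norm.2, ?_⟩
  intro a ha b hb
  calc dist a b ≤ dist a y + dist b y := dist_triangle_right a b y
    _ ≤ ε / 3 + ε / 3 := add_le_add ha hb
    _ < ε := by linarith

theorem flatten_map_range_take_drop (u : List A) (n k : ℕ) :
    ((List.range k).map fun i => (u.drop (i * n)).take n).flatten = u.take (k * n) := by
  induction k with
  | zero => simp
  | succ k ih => simp [List.range_succ, ih, add_mul, List.take_add]

theorem sum_range_sum_range_sub_div {M : Type*} [AddCommMonoid M] (f : ℕ → M) {n L : ℕ}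
    (hn : 0 < n) (hL : n ≤ L) :
    ∑ s ∈ Finset.range n, ∑ i ∈ Finset.range ((L - s) / n), f (s + i * n) =
      ∑ j ∈ Finset.range (L - n + 1), f j := by
  rw [← Finset.sum_fiberwise_of_maps_to (s := Finset.range (L - n + 1)) (g := (· % n))
    (t := Finset.range n) fun j _ => Finset.mem_range.2 (Nat.mod_lt j hn)]
  refine Finset.sum_congr rfl fun s hs => ?_
  rw [Finset.mem_range] at hs
  rw [← Finset.sum_image fun i _ j _ hij => Nat.eq_of_mul_eq_mul_right hn (by simpa using hij)]
  congr 1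
  ext j
  simp only [Finset.mem_image, Finset.mem_range, Finset.mem_filter]
  constructor
  · rintro ⟨i, hi, rfl⟩
    have hi' : (i + 1) * n ≤ L - s := (Nat.le_div_iff_mul_le hn).1 hi
    refine ⟨by rw [add_mul] at hi'; omega, ?_⟩
    rw [Nat.add_mul_mod_self_right, Nat.mod_eq_of_lt hs]
  · rintro ⟨hj, rfl⟩
    refine ⟨j / n, (Nat.le_div_iff_mul_le hn).2 ?_, Nat.mod_add_div' j n⟩
    have := Nat.mod_add_div' j n
    rw [Nat.succ_mul]
    omega

theorem occ_eq_card_filter [DecidableEq A] {v w : List A} (h : v.length ≤ w.length) :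
    occ v w = ((Finset.range (w.length - v.length + 1)).filter
      fun j => (w.drop j).take v.length = v).card := by
  rw [occ, ← Set.ncard_coe_finset]
  congr 1
  ext j
  simp only [OccursIn, List.prefix_iff_eq_take, Finset.coe_filter, Finset.mem_range,
    Set.mem_ofPred_eq]
  constructor
  · exact fun ⟨hj, hv⟩ => ⟨by omega, hv.symm⟩
  · exact fun ⟨hj, hv⟩ => ⟨by omega, hv.symm⟩

theorem sum_factors_eq_sum_occ_smul {M : Type*} [AddCommMonoid M] (f : List A → M)
    {w : List A} {n : ℕ} (hn : n ≤ w.length) {V : Finset (List A)}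
    (hV : ∀ v ∈ V, v.length = n) (hwV : ∀ j, j + n ≤ w.length → (w.drop j).take n ∈ V) :
    ∑ j ∈ Finset.range (w.length - n + 1), f ((w.drop j).take n) = ∑ v ∈ V, occ v w • f v := by
  classical
  rw [← Finset.sum_fiberwise_of_maps_to fun j hj => hwV j (by rw [Finset.mem_range] at hj; omega)]
  refine Finset.sum_congr rfl fun v hv => ?_
  rw [Finset.sum_congr rfl fun j hj => congrArg f (Finset.mem_filter.1 hj).2, Finset.sum_const,
    occ_eq_card_filter (by rwa [hV v hv]), hV v hv]

noncomputable def wordsOfLength [Finite A] (W : Set (List A)) (n : ℕ) : Finset (List A) :=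
  Set.Finite.toFinset (s := {v | v ∈ W ∧ v.length = n})
    ((List.finite_length_eq A n).subset fun _ hv => hv.2)

@[simp]
theorem mem_wordsOfLength [Finite A] {W : Set (List A)} {n : ℕ} {v : List A} :
    v ∈ wordsOfLength W n ↔ v ∈ W ∧ v.length = n := by
  simp [wordsOfLength]

section Additive

variable {B : Type*} [NormedAddCommGroup B] {W : Set (List A)}
  {F : List A → B} {D : ℝ} {c : ℕ → ℝ}

structure IsAdditiveWith (W : Set (List A)) (F : List A → B) (D : ℝ) (c : ℕ → ℝ) : Prop where
  antitone : Antitone c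
  nonneg : ∀ n, 0 ≤ c n
  norm_flatten_sub_sum_le : ∀ vs : List (List A), (∀ v ∈ vs, v ∈ W) → vs.flatten ∈ W →
    ‖F vs.flatten - (vs.map F).sum‖ ≤ (vs.map fun v => c v.length * (v.length : ℝ)).sum
  bound_nonneg : 0 ≤ D
  norm_le : ∀ v ∈ W, ‖F v‖ ≤ D * v.length

namespace IsAdditiveWith

theorem mul_le_of_le (hF : IsAdditiveWith W F D c) {m n : ℕ} (h : m ≤ n) : c m * m ≤ c 0 * n :=
  mul_le_mul (hF.antitone (Nat.zero_le m)) (Nat.cast_le.2 h) (Nat.cast_nonneg m) (hF.nonneg 0)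

theorem norm_le_of_length_le (hF : IsAdditiveWith W F D c) {v : List A} (hv : v ∈ W) {n : ℕ}
    (h : v.length ≤ n) : ‖F v‖ ≤ D * n :=
  (hF.norm_le v hv).trans (mul_le_mul_of_nonneg_left (Nat.cast_le.2 h) hF.bound_nonneg)

theorem norm_sub_sum_le_of_append (hF : IsAdditiveWith W F D c) (hW : IsFactorial W)
    {p r : List A} {bs : List (List A)} {n : ℕ} (hw : p ++ bs.flatten ++ r ∈ W)
    (hbs : ∀ b ∈ bs, b.length = n) (hpn : p.length ≤ n) (hrn : r.length ≤ n) :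
    ‖F (p ++ bs.flatten ++ r) - (bs.map F).sum‖ ≤
      c n * (p ++ bs.flatten ++ r).length + 2 * (c 0 + D) * n := by
  have hp : p ∈ W := hW ((List.prefix_append p _).isInfix.trans (List.prefix_append _ r).isInfix) hw
  have hr : r ∈ W := hW (List.suffix_append _ r).isInfix hw
  have hb : ∀ b ∈ bs, b ∈ W := fun b hb =>
    hW ((List.infix_of_mem_flatten hb).trans (List.infix_append p _ r)) hw
  have hadd := hF.norm_flatten_sub_sum_le (p :: (bs ++ [r]))
    (by simpa [or_imp, forall_and] using ⟨hp, hb, hr⟩) (by simpa using hw)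
  have hblocks : (bs.map fun v => c v.length * (v.length : ℝ)).sum = c n * bs.flatten.length := by
    rw [List.length_flatten, Nat.cast_list_sum, List.map_map, ← List.sum_map_mul_left]
    exact congrArg _ (List.map_congr_left fun b hb => by simp [hbs b hb])
  simp only [List.flatten_cons, List.flatten_append, List.flatten_nil, List.append_nil,
    List.map_cons, List.map_append, List.map_nil, List.sum_cons, List.sum_append, List.sum_nil,
    add_zero, hblocks] at hadd
  have hlen : (bs.flatten.length : ℝ) ≤ (p ++ bs.flatten ++ r).length :=
    Nat.cast_le.2 (by rw [List.length_append, List.length_append]; omega)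
  have hcn := hF.nonneg n
  calc ‖F (p ++ bs.flatten ++ r) - (bs.map F).sum‖
      = ‖F (p ++ (bs.flatten ++ r)) - (F p + ((bs.map F).sum + F r)) + F p + F r‖ := by
        rw [List.append_assoc]; congr 1; abel
    _ ≤ ‖F (p ++ (bs.flatten ++ r)) - (F p + ((bs.map F).sum + F r))‖ + ‖F p‖ + ‖F r‖ :=
        norm_add₃_le
    _ ≤ c 0 * n + c n * (p ++ bs.flatten ++ r).length + c 0 * n + D * n + D * n := by
        gcongr
        · linarith [hF.mul_le_of_le hpn, hF.mul_le_of_le hrn, mul_le_mul_of_nonneg_left hlen hcn]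
        · exact hF.norm_le_of_length_le hp hpn
        · exact hF.norm_le_of_length_le hr hrn
    _ = c n * (p ++ bs.flatten ++ r).length + 2 * (c 0 + D) * n := by ring

theorem norm_sub_sum_blocks_le (hF : IsAdditiveWith W F D c) (hW : IsFactorial W) {w : List A}
    (hw : w ∈ W) {n s : ℕ} (hn : 0 < n) (hs : s < n) :
    ‖F w - ∑ i ∈ Finset.range ((w.length - s) / n), F ((w.drop (s + i * n)).take n)‖ ≤
      c n * w.length + 2 * (c 0 + D) * n := by
  set k := (w.length - s) / n
  have hsplit : w.take s ++ ((List.range k).map fun i => (w.drop (s + i * n)).take n).flatten ++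
      w.drop (s + k * n) = w := by
    simp only [← List.drop_drop, flatten_map_range_take_drop, List.append_assoc,
      List.take_append_drop]
  have hk : w.length - s < k * n + n := by
    simpa [mul_add, mul_comm] using Nat.lt_mul_div_succ (w.length - s) hn
  have h := hF.norm_sub_sum_le_of_append hW (n := n) (hsplit ▸ hw) ?_ ?_ ?_
  · rw [hsplit, List.map_map] at h
    exact h
  · simp only [List.mem_map, List.mem_range]
    rintro _ ⟨i, hi, rfl⟩
    have := (Nat.le_div_iff_mul_le hn).1 hi
    rw [Nat.succ_mul] at this
    simp only [List.length_take, List.length_drop]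
    omega
  · simp only [List.length_take]; omega
  · simp only [List.length_drop]; omega

variable [NormedSpace ℝ B]

theorem norm_smul_sub_sum_factors_le (hF : IsAdditiveWith W F D c) (hW : IsFactorial W)
    {w : List A} (hw : w ∈ W) {n : ℕ} (hn : 0 < n) (hnw : n ≤ w.length) :
    ‖(n : ℝ) • F w - ∑ j ∈ Finset.range (w.length - n + 1), F ((w.drop j).take n)‖ ≤
      n * (c n * w.length + 2 * (c 0 + D) * n) := by
  have havg : (n : ℝ) • F w - ∑ j ∈ Finset.range (w.length - n + 1), F ((w.drop j).take n) =
      ∑ s ∈ Finset.range n,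
        (F w - ∑ i ∈ Finset.range ((w.length - s) / n), F ((w.drop (s + i * n)).take n)) := by
    rw [Finset.sum_sub_distrib, sum_range_sum_range_sub_div (fun j => F ((w.drop j).take n)) hn hnw,
      Finset.sum_const, Finset.card_range, Nat.cast_smul_eq_nsmul]
  rw [havg, ← Finset.card_range n, ← nsmul_eq_mul, ← Finset.sum_const, Finset.card_range]
  exact (norm_sum_le _ _).trans <| Finset.sum_le_sum fun s hs =>
    hF.norm_sub_sum_blocks_le hW hw hn (Finset.mem_range.1 hs)

theorem norm_inv_smul_sub_le [Finite A] (hF : IsAdditiveWith W F D c) (hW : IsFactorial W)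
    (ν : List A → ℝ) {w : List A} (hw : w ∈ W) {n : ℕ} (hn : 0 < n) (hnw : n ≤ w.length) :
    ‖(w.length : ℝ)⁻¹ • F w - (n : ℝ)⁻¹ • ∑ v ∈ wordsOfLength W n, ν v • F v‖ ≤
      c n + 2 * (c 0 + D) * n / w.length +
        (n : ℝ)⁻¹ * ∑ v ∈ wordsOfLength W n, |(occ v w : ℝ) / w.length - ν v| * ‖F v‖ := by
  set V := wordsOfLength W n
  set L : ℝ := (w.length : ℝ)
  set S := ∑ v ∈ V, (occ v w : ℝ) • F v
  have hL : 0 < L := Nat.cast_pos.2 (hn.trans_le hnw)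
  have hS : ∑ j ∈ Finset.range (w.length - n + 1), F ((w.drop j).take n) = S := by
    rw [sum_factors_eq_sum_occ_smul F hnw (fun v hv => (mem_wordsOfLength.1 hv).2)
      fun j hj => mem_wordsOfLength.2
        ⟨hW.drop_take_mem hw j n, by simp only [List.length_take, List.length_drop]; omega⟩]
    simp_rw [S, V, Nat.cast_smul_eq_nsmul]
  have hfreq : ∑ v ∈ V, ((occ v w : ℝ) / L - ν v) • F v = L⁻¹ • S - ∑ v ∈ V, ν v • F v := by
    simp_rw [S, sub_smul, Finset.sum_sub_distrib, Finset.smul_sum, smul_smul, div_eq_inv_mul]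
  have hsplit : L⁻¹ • F w - (n : ℝ)⁻¹ • ∑ v ∈ V, ν v • F v =
      ((n : ℝ) * L)⁻¹ • ((n : ℝ) • F w - S) +
        (n : ℝ)⁻¹ • ∑ v ∈ V, ((occ v w : ℝ) / L - ν v) • F v := by
    have hnL : L⁻¹ = ((n : ℝ) * L)⁻¹ * n := by field_simp
    rw [hfreq]
    linear_combination (norm := module) hnL • F w
  have hblocks : ‖((n : ℝ) * L)⁻¹ • ((n : ℝ) • F w - S)‖ ≤ c n + 2 * (c 0 + D) * n / L := by
    rw [norm_smul, Real.norm_of_nonneg (by positivity), ← hS]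
    calc ((n : ℝ) * L)⁻¹ * ‖(n : ℝ) • F w - _‖
        ≤ ((n : ℝ) * L)⁻¹ * (n * (c n * L + 2 * (c 0 + D) * n)) :=
          mul_le_mul_of_nonneg_left (hF.norm_smul_sub_sum_factors_le hW hw hn hnw) (by positivity)
      _ = c n + 2 * (c 0 + D) * n / L := by field_simp
  have hfreqs : ‖(n : ℝ)⁻¹ • ∑ v ∈ V, ((occ v w : ℝ) / L - ν v) • F v‖ ≤
      (n : ℝ)⁻¹ * ∑ v ∈ V, |(occ v w : ℝ) / L - ν v| * ‖F v‖ := by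
    rw [norm_smul, Real.norm_of_nonneg (by positivity)]
    gcongr
    exact (norm_sum_le _ _).trans_eq
      (Finset.sum_congr rfl fun v _ => by rw [norm_smul, Real.norm_eq_abs])
  rw [hsplit]
  exact (norm_add_le _ _).trans (add_le_add hblocks hfreqs)

theorem eventually_norm_inv_smul_sub_le [Finite A] (hF : IsAdditiveWith W F D c)
    (hW : IsFactorial W) {ν : List A → ℝ}
    (hν : ∀ v ∈ W, Tendsto (fun w => (occ v w : ℝ) / w.length) (wordsFilter W) (𝓝 (ν v)))
    {n : ℕ} (hn : 0 < n) {δ : ℝ} (hδ : 0 < δ) :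
    ∀ᶠ w in wordsFilter W,
      ‖(w.length : ℝ)⁻¹ • F w - (n : ℝ)⁻¹ • ∑ v ∈ wordsOfLength W n, ν v • F v‖ ≤ c n + δ := by
  have hboundary : Tendsto (fun w : List A => 2 * (c 0 + D) * n / w.length) (wordsFilter W) (𝓝 0) :=
    tendsto_const_nhds.div_atTop (tendsto_natCast_atTop_atTop.comp (tendsto_length_wordsFilter W))
  have hfreqs : Tendsto (fun w => ∑ v ∈ wordsOfLength W n, |(occ v w : ℝ) / w.length - ν v| * ‖F v‖)
      (wordsFilter W) (𝓝 0) := by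
    simpa using tendsto_finsetSum _ fun v hv =>
      ((hν v (mem_wordsOfLength.1 hv).1).sub_const (ν v)).abs.mul_const ‖F v‖
  have herror := hboundary.add (hfreqs.const_mul (n : ℝ)⁻¹)
  rw [mul_zero, add_zero] at herror
  filter_upwards [herror.eventually (gt_mem_nhds hδ), eventually_mem_wordsFilter W n]
    with w hsmall ⟨hw, hnw⟩
  exact (hF.norm_inv_smul_sub_le hW ν hw hn hnw).trans
    (by rw [add_assoc]; exact add_le_add le_rfl hsmall.le)

theorem exists_eventually_norm_inv_smul_sub_le [Finite A] (hF : IsAdditiveWith W F D c)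
    (hW : IsFactorial W) (hc : Tendsto c atTop (𝓝 0)) {ν : List A → ℝ}
    (hν : ∀ v ∈ W, Tendsto (fun w => (occ v w : ℝ) / w.length) (wordsFilter W) (𝓝 (ν v)))
    {ε : ℝ} (hε : 0 < ε) :
    ∃ y, ∀ᶠ w in wordsFilter W, ‖(w.length : ℝ)⁻¹ • F w - y‖ ≤ ε := by
  obtain ⟨n, hcn, hn⟩ := ((hc.eventually (gt_mem_nhds (half_pos hε))).and
    (eventually_gt_atTop 0)).exists
  exact ⟨_, (hF.eventually_norm_inv_smul_sub_le hW hν hn (half_pos hε)).mono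
    fun w hw => hw.trans (by linarith)⟩

end IsAdditiveWith

end Additive

theorem additive_limit_exists_general
    {A : Type*} [Fintype A]
    (Ω : Set (ℤ → A))
    (hue : UniquelyErgodic Ω)
    (B : Type*) [NormedAddCommGroup B] [NormedSpace ℝ B] [CompleteSpace B]
    (F : List A → B) (hF : IsAdditive (words Ω) F) :
    ∃ x : B, TendstoWords (words Ω) (fun w => ((w.length : ℝ))⁻¹ • F w) x := by
  obtain ⟨D, hD, c, hc_anti, hc_nonneg, hc, hF_flatten, hF_le⟩ := hF
  have hF' : IsAdditiveWith (words Ω) F D c := ⟨hc_anti, hc_nonneg, hF_flatten, hD.le, hF_le⟩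
  choose! ν hν using hue
  obtain ⟨x, hx⟩ := exists_tendsto_of_forall_eventually_norm_sub_le fun ε hε =>
    hF'.exists_eventually_norm_inv_smul_sub_le (isFactorial_words Ω) hc
      (fun v hv => tendstoWords_iff.1 (hν v hv)) hε
  exact ⟨x, tendstoWords_iff.2 hx⟩

/-- on a strictly ergodic subshift, every Banach-space-valued additive
function `F` satisfies a uniform ergodic theorem: `lim_{|w|→∞} F(w)/|w|` exists. -/
theorem additive_limit_exists
    {A : Type*} [Fintype A] [Nonempty A] [TopologicalSpace A] [DiscreteTopology A]
    (Ω : Set (ℤ → A)) (hΩ : IsSubshift Ω) (hne : Ω.Nonempty) (hmin : IsMinimal Ω)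
    (hue : UniquelyErgodic Ω)
    (B : Type*) [NormedAddCommGroup B] [NormedSpace ℝ B] [CompleteSpace B]
    (F : List A → B) (hF : IsAdditive (words Ω) F) :
    ∃ x : B, TendstoWords (words Ω) (fun w => ((w.length : ℝ))⁻¹ • F w) x :=
  additive_limit_exists_general Ω hue B F hF

end SubshiftErgodic
end

section
/- Let (Ω,T) be a minimal subshift over a finite alphabet A with associated set of words W, and assume (Ω,T) satisfies (PQ): there is a constant C > 0 with ν(v) ≥ C for every nonempty v ∈ W. Then (Ω,T) satisfies (SET): for every subadditive function F: W → ℝ the limit lim_{|w|→∞} F(w)/|w| exists and equals inf_{n≥1} F^{(n)}. -/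
open Filter Topology

namespace SubshiftErgodic

variable {A : Type*}

-- ## filter lemmas

lemma eventually_wordsFilter {W : Set (List A)} {P : List A → Prop} {L : ℕ}
    (h : ∀ w ∈ W, L ≤ w.length → P w) : ∀ᶠ w in wordsFilter W, P w := by
  have hmem : {w | w ∈ W ∧ L ≤ w.length} ∈ wordsFilter W :=
    Filter.mem_iInf_of_mem L (Filter.mem_principal_self _)
  exact Filter.mem_of_superset hmem (fun w hw => h w hw.1 hw.2)

lemma exists_of_eventually_wordsFilter {W : Set (List A)} {P : List A → Prop}
    (h : ∀ᶠ w in wordsFilter W, P w) : ∃ L, ∀ w ∈ W, L ≤ w.length → P w := by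
  have hdir : Directed (· ≥ ·) (fun L : ℕ => Filter.principal {w | w ∈ W ∧ L ≤ w.length}) := by
    intro a b
    refine ⟨max a b, Filter.principal_mono.2 ?_, Filter.principal_mono.2 ?_⟩ <;>
      · intro w hw; exact ⟨hw.1, le_trans (by omega) hw.2⟩
  obtain ⟨L, hL⟩ := (Filter.mem_iInf_of_directed hdir _).1 h
  exact ⟨L, fun w hw hl => hL ⟨hw, hl⟩⟩

-- ## words lemmas

lemma infix_mem_words {Ω : Set (ℤ → A)} {v w : List A} (hvw : v <:+: w)
    (hw : w ∈ words Ω) : v ∈ words Ω := by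
  obtain ⟨ω, hΩ, k, hk⟩ := hw
  obtain ⟨s, t, rfl⟩ := hvw
  refine ⟨ω, hΩ, k + s.length, fun i => ?_⟩
  have hlen : (s.length + (i : ℕ)) < (s ++ v ++ t).length := by
    simp only [List.length_append]; omega
  have := hk ⟨s.length + (i : ℕ), hlen⟩
  simp only [List.get_eq_getElem] at this ⊢
  have harr : k + s.length + (i : ℕ) = k + ((s.length + (i : ℕ) : ℕ) : ℤ) := by push_cast; ring
  rw [harr, this]
  have h1 : s.length + (i : ℕ) < (s ++ v).length := by simp only [List.length_append]; omega
  rw [List.getElem_append_left h1, List.getElem_append_right (by omega)]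
  simp

lemma exists_length_mem_words {Ω : Set (ℤ → A)} (hne : Ω.Nonempty) (n : ℕ) :
    ∃ v ∈ words Ω, v.length = n := by
  obtain ⟨ω, hω⟩ := hne
  refine ⟨List.ofFn (fun i : Fin n => ω (i : ℕ)), ⟨ω, hω, 0, fun i => ?_⟩, by simp⟩
  simp [List.get_ofFn]

-- ## wordSup lemmas

section Sub
variable [Finite A] {W : Set (List A)} {F : List A → ℝ}

lemma wordSup_bddAbove (n : ℕ) :
    BddAbove ((fun v => F v / (v.length : ℝ)) '' {v | v ∈ W ∧ v.length = n}) := by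
  apply Set.Finite.bddAbove
  apply Set.Finite.image
  exact (List.finite_length_eq A n).subset (fun v hv => hv.2)

lemma le_wordSup {v : List A} (hv : v ∈ W) (hne : v ≠ []) :
    F v ≤ wordSup W F v.length * v.length := by
  have hpos : (0 : ℝ) < v.length := by
    have : 0 < v.length := List.length_pos_iff.2 hne
    exact_mod_cast this
  have : F v / v.length ≤ wordSup W F v.length :=
    le_csSup (wordSup_bddAbove _) ⟨v, ⟨hv, rfl⟩, rfl⟩
  calc F v = F v / v.length * v.length := by field_simp
  _ ≤ wordSup W F v.length * v.length := by
      exact mul_le_mul_of_nonneg_right this hpos.le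

lemma wordSup_le {n : ℕ} (hex : ∃ v ∈ W, v.length = n) {b : ℝ}
    (h : ∀ v ∈ W, v.length = n → F v / (v.length : ℝ) ≤ b) : wordSup W F n ≤ b := by
  apply csSup_le
  · obtain ⟨v, hv, hl⟩ := hex; exact ⟨_, ⟨v, ⟨hv, hl⟩, rfl⟩⟩
  · rintro x ⟨v, ⟨hv, hl⟩, rfl⟩; exact h v hv hl

variable (hfac : ∀ v w : List A, v <:+: w → w ∈ W → v ∈ W)
    (hsub : IsSubadditive W F)

include hfac hsub in
lemma letters_bound : ∀ w ∈ W, w ≠ [] → F w ≤ wordSup W F 1 * w.length := by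
  suffices h : ∀ N, ∀ w ∈ W, w.length ≤ N → w ≠ [] → F w ≤ wordSup W F 1 * w.length by
    intro w hw hne; exact h w.length w hw le_rfl hne
  intro N
  induction N with
  | zero => intro w hw hN hne; exact absurd (List.length_eq_zero_iff.1 (by omega)) hne
  | succ N ih =>
  intro w hw hN hne
  rcases Nat.lt_or_ge w.length 2 with h2 | h2
  · have h1 : w.length = 1 := by
      have := List.length_pos_iff.2 hne; omega
    have := le_wordSup (F := F) hw hne
    rw [h1] at this
    rw [h1]; simpa using this
  · have ha : w.take 1 ∈ W := hfac _ _ (w.take_prefix 1).isInfix hw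
    have hc : w.drop 1 ∈ W := hfac _ _ (w.drop_suffix 1).isInfix hw
    have hlc : (w.drop 1).length = w.length - 1 := by simp
    have hcne : w.drop 1 ≠ [] := by
      intro h; rw [h] at hlc; simp at hlc; omega
    have hane : w.take 1 ≠ [] := by
      rw [Ne, List.take_eq_nil_iff]
      push_neg
      exact ⟨one_ne_zero, hne⟩
    have hsplit : F w ≤ F (w.take 1) + F (w.drop 1) := by
      have := hsub _ _ ha hc (by rw [List.take_append_drop]; exact hw)
      rwa [List.take_append_drop] at this
    have h1 := le_wordSup (F := F) ha hane
    have hla : (w.take 1).length = 1 := by simp; omega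
    rw [hla] at h1
    norm_num at h1
    have h3 := ih _ hc (by rw [hlc]; omega) hcne
    rw [hlc] at h3
    have hcast : ((w.length - 1 : ℕ) : ℝ) = (w.length : ℝ) - 1 := by
      have hl1 : 1 ≤ w.length := List.length_pos_iff.2 hne
      rw [Nat.cast_sub hl1]; simp
    rw [hcast] at h3
    have hring : wordSup W F 1 * ((w.length : ℝ) - 1) = wordSup W F 1 * (w.length:ℝ) - wordSup W F 1 := by ring
    rw [hring] at h3
    linarith

include hfac hsub in
lemma blocks_bound {n : ℕ} (hn : 1 ≤ n) :
    ∀ w ∈ W, w ≠ [] → F w ≤ wordSup W F n * w.length +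
      n * (|wordSup W F 1| + |wordSup W F n|) := by
  set F1 := wordSup W F 1 with hF1
  set Fn := wordSup W F n with hFn
  suffices h : ∀ N, ∀ w ∈ W, w.length ≤ N → w ≠ [] →
      F w ≤ Fn * w.length + n * (|F1| + |Fn|) by
    intro w hw hne; exact h w.length w hw le_rfl hne
  intro N
  induction N with
  | zero => intro w hw hN hne; exact absurd (List.length_eq_zero_iff.1 (by omega)) hne
  | succ N ih =>
  intro w hw hN hne
  have hCn0 : (0:ℝ) ≤ n * (|F1| + |Fn|) := by positivity
  rcases lt_trichotomy w.length n with hlt | heq | hgt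
  · have h1 := letters_bound hfac hsub w hw hne
    have e1 : F1 * w.length ≤ |F1| * w.length :=
      mul_le_mul_of_nonneg_right (le_abs_self _) (by positivity)
    have e2 : |F1| * (w.length:ℝ) ≤ |F1| * n := by
      apply mul_le_mul_of_nonneg_left _ (abs_nonneg _)
      exact_mod_cast hlt.le
    have e4a : -|Fn| * (w.length:ℝ) ≤ Fn * w.length :=
      mul_le_mul_of_nonneg_right (neg_abs_le Fn) (by positivity)
    have e4b : |Fn| * (w.length:ℝ) ≤ |Fn| * n := by
      apply mul_le_mul_of_nonneg_left _ (abs_nonneg _)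
      exact_mod_cast hlt.le
    nlinarith [h1, e1, e2, e4a, e4b]
  · have h1 := le_wordSup (F := F) hw hne
    rw [heq] at h1
    rw [heq]
    linarith
  · have ha : w.take n ∈ W := hfac _ _ (w.take_prefix n).isInfix hw
    have hc : w.drop n ∈ W := hfac _ _ (w.drop_suffix n).isInfix hw
    have hla : (w.take n).length = n := by simp; omega
    have hlc : (w.drop n).length = w.length - n := by simp
    have hane : w.take n ≠ [] := by
      rw [Ne, List.take_eq_nil_iff]; push_neg; exact ⟨by omega, hne⟩
    have hcne : w.drop n ≠ [] := by
      intro h; rw [h] at hlc; simp at hlc; omega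
    have hsplit : F w ≤ F (w.take n) + F (w.drop n) := by
      have := hsub _ _ ha hc (by rw [List.take_append_drop]; exact hw)
      rwa [List.take_append_drop] at this
    have h1 := le_wordSup (F := F) ha hane
    rw [hla] at h1
    have h3 := ih _ hc (by rw [hlc]; omega) hcne
    rw [hlc] at h3
    have hcast : ((w.length - n : ℕ) : ℝ) = (w.length : ℝ) - n := by
      rw [Nat.cast_sub hgt.le]
    rw [hcast] at h3
    have hring : Fn * ((w.length:ℝ) - n) = Fn * (w.length:ℝ) - Fn * n := by ring
    rw [hring] at h3
    linarith

include hfac hsub in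
lemma upper_bound_eventually {n : ℕ} (hn : 1 ≤ n) {ε : ℝ} (hε : 0 < ε) :
    ∃ L : ℕ, 1 ≤ L ∧ ∀ w ∈ W, L ≤ w.length →
      F w ≤ (wordSup W F n + ε) * w.length := by
  set Cn := (n:ℝ) * (|wordSup W F 1| + |wordSup W F n|) with hCn
  refine ⟨Nat.ceil (Cn / ε) + 1, by omega, fun w hw hL => ?_⟩
  have hlen : 1 ≤ w.length := le_trans (by omega) hL
  have hne : w ≠ [] := by
    intro h; rw [h] at hlen; simp at hlen
  have h := blocks_bound hfac hsub hn w hw hne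
  have hCε : Cn ≤ ε * w.length := by
    have h1 : Cn / ε ≤ Nat.ceil (Cn / ε) := Nat.le_ceil _
    have h2 : (Nat.ceil (Cn / ε) : ℝ) ≤ (w.length : ℝ) := by
      exact_mod_cast le_trans (by omega) hL
    calc Cn = (Cn / ε) * ε := by field_simp
    _ ≤ (w.length : ℝ) * ε := mul_le_mul_of_nonneg_right (le_trans h1 h2) hε.le
    _ = ε * w.length := by ring
  have : (wordSup W F n + ε) * (w.length:ℝ)
      = wordSup W F n * w.length + ε * w.length := by ring
  rw [this]
  linarith

include hfac hsub in
lemma packing_bound {u : List A} (hu : u ∈ W) (hune : u ≠ []) {ρ E : ℝ} (hE : 0 ≤ E)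
    (Hx : ∀ x ∈ W, x ≠ [] → F x ≤ ρ * x.length + E) :
    ∀ m : ℕ, ∀ w, w ∈ W → w ≠ [] → ∀ s : Fin m → ℕ, (∀ i, OccursIn u w (s i)) →
      (∀ i j : Fin m, i < j → s i + u.length ≤ s j) →
      F w ≤ m * F u + ρ * ((w.length:ℝ) - m * u.length) + (m + 1) * E := by
  have hu1 : 1 ≤ u.length := List.length_pos_iff.2 hune
  intro m
  induction m with
  | zero =>
    intro w hw hne _s _hocc _hgap
    have := Hx w hw hne
    push_cast
    simp only [zero_mul, mul_zero, sub_zero, zero_add, one_mul]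
    linarith
  | succ m ih =>
    intro w hw hne s hocc hgap
    set k := s 0 with hk
    obtain ⟨hk1, hk2⟩ := hocc 0
    obtain ⟨t, ht⟩ := hk2
    set a := w.take k with ha
    set c := w.drop (k + u.length) with hc
    have hct : c = t := by
      rw [hc, ← List.drop_drop, ← ht, List.drop_left]
    have hdk : w.drop k = u ++ c := by rw [hct]; exact ht.symm
    have hweq : w = a ++ (u ++ c) := by
      rw [ha, ← hdk, List.take_append_drop]
    have hla : a.length = k := by rw [ha]; simp; omega
    have hlc : c.length = w.length - (k + u.length) := by rw [hc]; simp
    -- memberships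
    have huc : u ++ c ∈ W := by
      rw [← hdk]; exact hfac _ _ (w.drop_suffix k).isInfix hw
    have hcW : c ∈ W := hfac _ _ (w.drop_suffix (k + u.length)).isInfix hw
    have haW : a ∈ W := hfac _ _ (w.take_prefix k).isInfix hw
    set s' : Fin m → ℕ := fun i => s i.succ - (k + u.length) with hs'
    have hklei : ∀ i : Fin m, k + u.length ≤ s i.succ := fun i =>
      hgap 0 i.succ (Fin.succ_pos i)
    have hocc' : ∀ i : Fin m, OccursIn u c (s' i) := by
      intro i
      obtain ⟨h1, h2⟩ := hocc i.succ
      have hle := hklei i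
      constructor
      · rw [hlc]; simp only [hs']; omega
      · have hdd : c.drop (s' i) = w.drop (s i.succ) := by
          rw [hc, List.drop_drop]
          congr 1
          simp only [hs']; omega
        rw [hdd]; exact h2
    have hgap' : ∀ i j : Fin m, i < j → s' i + u.length ≤ s' j := by
      intro i j hij
      have h1 := hgap i.succ j.succ (Fin.succ_lt_succ_iff.mpr hij)
      have h2 := hklei i
      have h3 := hklei j
      simp only [hs']
      omega
    have haR : (a.length : ℝ) = k := by exact_mod_cast congrArg Nat.cast hla
    have hlcR : (c.length : ℝ) = (w.length:ℝ) - k - u.length := by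
      rw [hlc, Nat.cast_sub (by omega)]; push_cast; ring
    by_cases hcnil : c = []
    · have hm0 : m = 0 := by
        by_contra hm
        have i0 : Fin m := ⟨0, Nat.pos_of_ne_zero hm⟩
        obtain ⟨h1, _⟩ := hocc' i0
        have hc0 : c.length = 0 := by rw [hcnil]; rfl
        omega
      subst hm0
      have hweq2 : w = a ++ u := by rw [hweq, hcnil]; simp
      have hlcz : (0:ℝ) = (w.length:ℝ) - k - u.length := by
        rw [← hlcR, hcnil]; simp
      by_cases hanil : a = []
      · have hFwu : F w = F u := by rw [hweq2, hanil]; simp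
        have hkz : (k:ℝ) = 0 := by rw [hanil] at haR; simpa using haR.symm
        have hwl : (w.length:ℝ) = u.length := by linarith
        rw [hFwu]
        push_cast
        rw [hwl]
        ring_nf
        nlinarith [hE]
      · have hsp : F w ≤ F a + F u := by
          rw [hweq2]; exact hsub a u haW hu (by rw [← hweq2]; exact hw)
        have hFa := Hx a haW hanil
        rw [haR] at hFa
        have hwl : (w.length:ℝ) = (k:ℝ) + u.length := by linarith
        push_cast
        rw [hwl]
        ring_nf
        linarith [hE, hsp, hFa]
    · have hIH := ih c hcW hcnil s' hocc' hgap'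
      have hsp1 : F (u ++ c) ≤ F u + F c := hsub u c hu hcW huc
      by_cases hanil : a = []
      · have hFw : F w ≤ F u + F c := by
          have : w = u ++ c := by rw [hweq, hanil]; simp
          rw [this]; exact hsp1
        have hkz : (k:ℝ) = 0 := by rw [hanil] at haR; simpa using haR.symm
        have hwl : (w.length:ℝ) = (u.length:ℝ) + c.length := by linarith [hlcR]
        push_cast
        rw [hwl]
        ring_nf
        ring_nf at hIH
        linarith [hE, hFw, hIH]
      · have hsp0 : F w ≤ F a + F (u ++ c) := by
          rw [hweq]; exact hsub a (u ++ c) haW huc (by rw [← hweq]; exact hw)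
        have hFa := Hx a haW hanil
        rw [haR] at hFa
        have hwl : (w.length:ℝ) = (k:ℝ) + u.length + c.length := by linarith [hlcR]
        push_cast
        rw [hwl]
        ring_nf
        ring_nf at hIH
        linarith [hE, hsp0, hsp1, hIH, hFa]

end Sub

lemma packing_le_length {u w : List A} (hune : u ≠ []) {m : ℕ} (s : Fin m → ℕ)
    (hocc : ∀ i, OccursIn u w (s i))
    (hgap : ∀ i j : Fin m, i < j → s i + u.length ≤ s j) :
    m * u.length ≤ w.length := by
  have hu1 : 1 ≤ u.length := List.length_pos_iff.2 hune
  rcases Nat.eq_zero_or_pos m with hm | hm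
  · subst hm; simp
  · have hstep : ∀ j, ∀ hj : j < m, j * u.length ≤ s ⟨j, hj⟩ := by
      intro j
      induction j with
      | zero => intro hj; simp
      | succ j ihj =>
        intro hj
        have hj' : j < m := by omega
        have h1 := hgap ⟨j, hj'⟩ ⟨j + 1, hj⟩ (by simp)
        have h2 := ihj hj'
        calc (j + 1) * u.length = j * u.length + u.length := by ring
        _ ≤ s ⟨j, hj'⟩ + u.length := by omega
        _ ≤ s ⟨j + 1, hj⟩ := h1
    have hlast := hstep (m - 1) (by omega)
    obtain ⟨h1, _⟩ := hocc ⟨m - 1, by omega⟩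
    have : m * u.length = (m - 1) * u.length + u.length := by
      rcases Nat.exists_eq_add_of_le hm with ⟨p, hp⟩
      subst hp
      simp only [Nat.add_sub_cancel_left, Nat.add_mul, Nat.one_mul]
      ring
    omega

lemma exists_packing_maxDisjoint {u w : List A} (hune : u ≠ []) :
    ∃ s : Fin (maxDisjoint u w) → ℕ, (∀ i, OccursIn u w (s i)) ∧
      ∀ i j : Fin (maxDisjoint u w), i < j → s i + u.length ≤ s j := by
  have hu1 : 1 ≤ u.length := List.length_pos_iff.2 hune
  have hbdd : BddAbove {m : ℕ | ∃ s : Fin m → ℕ, (∀ i, OccursIn u w (s i)) ∧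
      ∀ i j : Fin m, i < j → s i + u.length ≤ s j} := by
    refine ⟨w.length, fun m hm => ?_⟩
    obtain ⟨s, h1, h2⟩ := hm
    have h3 := packing_le_length hune s h1 h2
    calc m = m * 1 := (Nat.mul_one m).symm
    _ ≤ m * u.length := Nat.mul_le_mul_left m hu1
    _ ≤ w.length := h3
  have hne : {m : ℕ | ∃ s : Fin m → ℕ, (∀ i, OccursIn u w (s i)) ∧
      ∀ i j : Fin m, i < j → s i + u.length ≤ s j}.Nonempty :=
    ⟨0, fun i => i.elim0, fun i => i.elim0, fun i => i.elim0⟩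
  exact Nat.sSup_mem hne hbdd

lemma pq_packing {W : Set (List A)} {C : ℝ} (hC : 0 < C) {u : List A}
    (hnu : (C : EReal) ≤ nu W u) (hune : u ≠ []) :
    ∃ L : ℕ, 1 ≤ L ∧ ∀ w ∈ W, L ≤ w.length →
      C / 2 * w.length ≤ (maxDisjoint u w : ℝ) * u.length := by
  have hlt : ((C / 2 : ℝ) : EReal) < ((C : ℝ) : EReal) := by
    exact_mod_cast (by linarith : C / 2 < C)
  have hev : ∀ᶠ w in wordsFilter W, ((C / 2 : ℝ) : EReal) <
      ((((maxDisjoint u w * u.length : ℕ) : ℝ) / (w.length : ℝ) : ℝ) : EReal) :=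
    Filter.eventually_lt_of_lt_liminf (lt_of_lt_of_le hlt hnu)
  obtain ⟨L, hL⟩ := exists_of_eventually_wordsFilter hev
  refine ⟨max L 1, le_max_right _ _, fun w hw hlw => ?_⟩
  have h := hL w hw (le_trans (le_max_left _ _) hlw)
  have h' : C / 2 < ((maxDisjoint u w * u.length : ℕ) : ℝ) / (w.length : ℝ) := by
    exact_mod_cast h
  have hwpos : (0 : ℝ) < w.length := by
    have : 1 ≤ w.length := le_trans (le_max_right _ _) hlw
    exact_mod_cast this
  have h2 := (lt_div_iff₀ hwpos).1 h'
  push_cast at h2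
  linarith


theorem PQ_implies_SET'
    {A : Type*} [Fintype A] [Nonempty A] [TopologicalSpace A] [DiscreteTopology A]
    (Ω : Set (ℤ → A)) (hne : Ω.Nonempty)
    (hPQ : PQ (words Ω)) :
    SET (words Ω) := by
  intro F hsub
  set W := words Ω with hW
  have hfac : ∀ v w : List A, v <:+: w → w ∈ W → v ∈ W :=
    fun v w h hw => infix_mem_words h hw
  have hlen : ∀ n : ℕ, ∃ v ∈ W, v.length = n := exists_length_mem_words hne
  obtain ⟨C, hC, hPQ'⟩ := hPQ
  set lam : EReal := ⨅ n : {n : ℕ // 1 ≤ n}, ((wordSup W F n.1 : ℝ) : EReal) with hlam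
  rcases eq_or_ne lam ⊥ with hbot | hbot
  · rw [hbot]
    rw [EReal.tendsto_nhds_bot_iff_real]
    intro M
    have hlt : lam < ((M - 1 : ℝ) : EReal) := by rw [hbot]; exact EReal.bot_lt_coe _
    rw [hlam] at hlt
    obtain ⟨n, hn⟩ := iInf_lt_iff.mp hlt
    have hnR : wordSup W F n.1 < M - 1 := by exact_mod_cast hn
    obtain ⟨L, hL1, hL⟩ := upper_bound_eventually hfac hsub n.2 one_pos
    apply eventually_wordsFilter (L := L)
    intro w hw hlw
    have h1 := hL w hw hlw
    have hwpos : (0:ℝ) < w.length := by exact_mod_cast le_trans hL1 hlw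
    have h2 : F w / w.length ≤ wordSup W F n.1 + 1 := (div_le_iff₀ hwpos).2 h1
    have : F w / (w.length:ℝ) < M := by linarith
    exact_mod_cast this
  · have hle1 : lam ≤ ((wordSup W F 1 : ℝ) : EReal) :=
      iInf_le (fun n : {n : ℕ // 1 ≤ n} => ((wordSup W F n.1 : ℝ) : EReal)) ⟨1, le_rfl⟩
    have htop : lam ≠ ⊤ := ne_top_of_le_ne_top (EReal.coe_ne_top _) hle1
    set lamR := lam.toReal with hlamR
    have hcoe : (lamR : EReal) = lam := EReal.coe_toReal htop hbot
    clear_value lamR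
    rw [← hcoe, EReal.tendsto_coe]
    have hlamle : ∀ n : ℕ, 1 ≤ n → lamR ≤ wordSup W F n := by
      intro n hn
      have h1 : lam ≤ ((wordSup W F n : ℝ) : EReal) :=
        iInf_le (fun n : {n : ℕ // 1 ≤ n} => ((wordSup W F n.1 : ℝ) : EReal)) ⟨n, hn⟩
      rw [← hcoe] at h1
      exact_mod_cast h1
    have hexn : ∀ δ : ℝ, 0 < δ → ∃ n : ℕ, 1 ≤ n ∧ wordSup W F n < lamR + δ := by
      intro δ hδ
      have h1 : lam < ((lamR + δ : ℝ) : EReal) := by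
        rw [← hcoe]; exact_mod_cast (by linarith : lamR < lamR + δ)
      rw [hlam] at h1
      obtain ⟨n, hn⟩ := iInf_lt_iff.mp h1
      exact ⟨n.1, n.2, by exact_mod_cast hn⟩
    rw [Metric.tendsto_nhds]
    intro ε hε
    by_cases H : ∃ L : ℕ, ∀ w ∈ W, L ≤ w.length → lamR - ε/2 < F w / w.length
    · obtain ⟨L0, hL0⟩ := H
      obtain ⟨n, hn1, hn2⟩ := hexn (ε/4) (by linarith)
      obtain ⟨L3, hL31, hL3⟩ := upper_bound_eventually hfac hsub hn1
        (show (0:ℝ) < ε/4 by linarith)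
      apply eventually_wordsFilter (L := max L0 L3)
      intro w hw hlw
      have h1 := hL0 w hw (le_trans (le_max_left _ _) hlw)
      have h2 := hL3 w hw (le_trans (le_max_right _ _) hlw)
      have hwpos : (0:ℝ) < w.length := by
        exact_mod_cast le_trans hL31 (le_trans (le_max_right _ _) hlw)
      have h2' : F w / w.length ≤ wordSup W F n + ε/4 := (div_le_iff₀ hwpos).2 h2
      rw [Real.dist_eq, abs_lt]
      constructor <;> linarith
    · exfalso
      push_neg at H
      set e2 := C * ε / 32 with he2
      have he2pos : 0 < e2 := by rw [he2]; positivity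
      clear_value e2
      obtain ⟨n0, hn01, hn02⟩ := hexn (e2/2) (by linarith)
      obtain ⟨LK, hLK1, hLK⟩ := upper_bound_eventually hfac hsub hn01
        (show (0:ℝ) < e2/2 by linarith)
      have hlong : ∀ x ∈ W, LK ≤ x.length → F x ≤ (lamR + e2) * x.length := by
        intro x hx hlx
        have h1 := hLK x hx hlx
        have hxpos : (0:ℝ) ≤ x.length := by positivity
        nlinarith [h1, mul_le_mul_of_nonneg_right hn02.le hxpos]
      set F1 := wordSup W F 1 with hF1
      clear_value F1
      set E := (LK : ℝ) * (|F1| + |lamR + e2|) with hE_def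
      have hE : 0 ≤ E := by rw [hE_def]; positivity
      clear_value E
      have Hx : ∀ x ∈ W, x ≠ [] → F x ≤ (lamR + e2) * x.length + E := by
        intro x hx hxne
        rcases le_or_gt LK x.length with h | h
        · linarith [hlong x hx h]
        · have h1 := letters_bound hfac hsub x hx hxne
          rw [← hF1] at h1
          have hxpos : (0:ℝ) ≤ x.length := by positivity
          have e1 : F1 * (x.length:ℝ) ≤ |F1| * x.length :=
            mul_le_mul_of_nonneg_right (le_abs_self _) hxpos
          have e3 : -|lamR + e2| * (x.length:ℝ) ≤ (lamR + e2) * x.length :=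
            mul_le_mul_of_nonneg_right (neg_abs_le _) hxpos
          have hxLK : (x.length : ℝ) ≤ LK := by exact_mod_cast h.le
          have e4 : (|F1| + |lamR + e2|) * (x.length:ℝ) ≤ (|F1| + |lamR + e2|) * LK :=
            mul_le_mul_of_nonneg_left hxLK (by positivity)
          rw [hE_def]
          linarith [h1, e1, e3, e4]
      obtain ⟨u, huW, hulen, hubad⟩ := H (max 1 (Nat.ceil (2 * E / e2)))
      have hu1 : 1 ≤ u.length := le_trans (le_max_left _ _) hulen
      have hune : u ≠ [] := by
        intro h; rw [h] at hu1; simp at hu1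
      have hupos : (0:ℝ) < u.length := by exact_mod_cast hu1
      have huE : 2 * E ≤ e2 * u.length := by
        have h1 : (2 * E / e2 : ℝ) ≤ Nat.ceil (2 * E / e2) := Nat.le_ceil _
        have h2 : (Nat.ceil (2 * E / e2) : ℝ) ≤ (u.length : ℝ) := by
          exact_mod_cast le_trans (le_max_right _ _) hulen
        calc 2 * E = (2 * E / e2) * e2 := by field_simp
        _ ≤ (u.length : ℝ) * e2 := mul_le_mul_of_nonneg_right (le_trans h1 h2) he2pos.le
        _ = e2 * u.length := by ring
      have hFu : F u ≤ (lamR - ε/2) * u.length := by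
        have h1 := hubad
        rw [div_le_iff₀ hupos] at h1
        linarith [h1]
      obtain ⟨L1, hL11, hL1⟩ := pq_packing hC (hPQ' u huW hune) hune
      have hbound : ∀ w ∈ W, max L1 u.length ≤ w.length →
          F w ≤ (lamR - C * ε / 8) * w.length := by
        intro w hw hlw
        obtain ⟨s, hocc, hgap⟩ := exists_packing_maxDisjoint (w := w) hune
        have hmul : maxDisjoint u w * u.length ≤ w.length :=
          packing_le_length hune s hocc hgap
        have hdis := hL1 w hw (le_trans (le_max_left _ _) hlw)
        have hw1 : 1 ≤ w.length := le_trans hL11 (le_trans (le_max_left _ _) hlw)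
        have hwne : w ≠ [] := by
          intro h; rw [h] at hw1; simp at hw1
        have hwpos : (0:ℝ) < w.length := by exact_mod_cast hw1
        have hkey := packing_bound hfac hsub huW hune hE Hx (maxDisjoint u w) w hw hwne
          s hocc hgap
        obtain ⟨md, hgen⟩ : ∃ md : ℕ, maxDisjoint u w = md := ⟨_, rfl⟩
        rw [hgen] at hmul hdis hkey
        set m : ℝ := (md : ℝ) with hmdef
        have hM1 : m * u.length ≤ (w.length:ℝ) := by
          rw [hmdef]; exact_mod_cast hmul
        have hmnn : (0:ℝ) ≤ m := by rw [hmdef]; positivity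
        have hulw : (u.length:ℝ) ≤ (w.length:ℝ) := by
          exact_mod_cast le_trans (le_max_right _ _) hlw
        have hcorr : (m + 1) * E ≤ e2 * w.length := by
          have h1 : (m + 1) * u.length ≤ 2 * w.length := by linarith [hM1, hulw]
          have h2 : ((m + 1) * E) * u.length ≤ (e2 * w.length) * u.length := by
            linarith [mul_le_mul_of_nonneg_right h1 hE,
              mul_le_mul_of_nonneg_left huE hwpos.le]
          exact le_of_mul_le_mul_right h2 hupos
        have hmFu : m * F u ≤ (lamR - ε/2) * (m * u.length) := by
          have h1 := mul_le_mul_of_nonneg_left hFu hmnn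
          linarith [h1]
        have hM2 : C/2 * (w.length:ℝ) * (ε/2) ≤ (m * u.length) * (ε/2) :=
          mul_le_mul_of_nonneg_right hdis (by positivity)
        have hpos1 : (0:ℝ) ≤ e2 * (m * u.length) :=
          mul_le_mul_of_nonneg_left (by positivity : (0:ℝ) ≤ m * (u.length:ℝ)) he2pos.le
            |>.trans_eq' (by ring)
        rw [he2] at hkey hcorr hpos1
        have hpos2 : (0:ℝ) ≤ C * ε * w.length :=
          mul_nonneg (mul_nonneg hC.le hε.le) hwpos.le
        linarith [hkey, hmFu, hcorr, hM2, hpos1, hpos2]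
      set n := max (max L1 u.length) 1 with hn
      clear_value n
      have hn1 : 1 ≤ n := by rw [hn]; exact le_max_right _ _
      have hnpos : (0:ℝ) < n := by exact_mod_cast hn1
      have hsup : wordSup W F n ≤ lamR - C * ε / 8 := by
        apply wordSup_le (hlen n)
        intro v hv hvl
        have h1 := hbound v hv (by rw [hvl, hn]; exact le_max_left _ _)
        rw [hvl, div_le_iff₀ hnpos]
        rw [hvl] at h1
        exact h1
      have h2 := hlamle n hn1
      linarith [hsup, h2, mul_pos hC hε]


/-- for a minimal subshift, (PQ) implies the uniform subadditive ergodic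
theorem (SET). -/
theorem PQ_implies_SET
    {A : Type*} [Fintype A] [Nonempty A] [TopologicalSpace A] [DiscreteTopology A]
    (Ω : Set (ℤ → A)) (hΩ : IsSubshift Ω) (hne : Ω.Nonempty) (hmin : IsMinimal Ω)
    (hPQ : PQ (words Ω)) :
    SET (words Ω) :=
  PQ_implies_SET' Ω hne hPQ

end SubshiftErgodic
end

section
/- Let (Ω,T) be a minimal subshift over a finite alphabet A with associated set of words W, and assume (Ω,T) satisfies (SET): for every subadditive function F: W → ℝ the limit lim_{|w|→∞} F(w)/|w| exists and equals inf_{n≥1} F^{(n)}. Then (Ω,T) satisfies (PQ): there is a constant C > 0 with ν(v) ≥ C for every nonempty v ∈ W. -/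
/-!
If (PQ) fails, pick words `v₀, v₁, …` of ever smaller `ν`. By (SET) the density of disjoint
copies of `vⱼ` in any long enough word is then uniformly close to `ν(vⱼ)`, and a word of small
`ν` is avoided by words much longer than itself, so each `vₖ` can be taken to be avoided by
words beyond all the thresholds of `v₀, …, vₖ₋₁`. The number of letters of `w` left uncovered
by a best cutting of `w` into pieces, the `vₖ` counting as covered, is subadditive and vanishes
on every `vₖ`; but for every length `n` some block of a long `vₖ`-free word has at most half of
its letters covered. So the limit of this function per letter, which (SET) provides, would be
both `0` and at least `1/2`.
-/

open Filter Topology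

namespace SubshiftErgodic

variable {A : Type*}

lemma occursIn_iff {v w : List A} {i : ℕ} :
    OccursIn v w i ↔ ∃ s t, w = s ++ v ++ t ∧ s.length = i := by
  constructor
  · rintro ⟨hlen, t, ht⟩
    refine ⟨w.take i, t, ?_, by simp; omega⟩
    rw [List.append_assoc, ht, List.take_append_drop]
  · rintro ⟨s, t, rfl, rfl⟩
    refine ⟨by simp, ?_⟩
    rw [List.append_assoc, List.drop_left]
    exact List.prefix_append v t

lemma infix_iff_exists_occursIn {v w : List A} : v <:+: w ↔ ∃ i, OccursIn v w i := by
  simp only [occursIn_iff]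
  exact ⟨fun ⟨s, t, h⟩ => ⟨s.length, s, t, h.symm, rfl⟩, fun ⟨_, s, t, h, _⟩ => ⟨s, t, h.symm⟩⟩

lemma OccursIn.append_right {v w : List A} {i : ℕ} (h : OccursIn v w i) (b : List A) :
    OccursIn v (w ++ b) i := by
  obtain ⟨s, t, rfl, hs⟩ := occursIn_iff.mp h
  exact occursIn_iff.mpr ⟨s, t ++ b, by simp, hs⟩

lemma OccursIn.append_left {v w : List A} {i : ℕ} (h : OccursIn v w i) (a : List A) :
    OccursIn v (a ++ w) (a.length + i) := by
  obtain ⟨s, t, rfl, rfl⟩ := occursIn_iff.mp h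
  exact occursIn_iff.mpr ⟨a ++ s, t, by simp, by simp⟩

def packings (v w : List A) : Set ℕ :=
  {m : ℕ | ∃ s : Fin m → ℕ, (∀ i, OccursIn v w (s i)) ∧
    ∀ i j : Fin m, i < j → s i + v.length ≤ s j}

lemma zero_mem_packings (v w : List A) : 0 ∈ packings v w :=
  ⟨Fin.elim0, fun i => i.elim0, fun i => i.elim0⟩

lemma packings_bddAbove {v : List A} (hv : v ≠ []) (w : List A) :
    BddAbove (packings v w) := by
  refine ⟨w.length + 1, fun m ⟨s, hs, hord⟩ => ?_⟩
  have hmono : StrictMono s := fun i j hij => by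
    have := hord i j hij
    have := List.length_pos_iff.mpr hv
    omega
  have hinj : Function.Injective
      fun i : Fin m => (⟨s i, by have := (hs i).1; omega⟩ : Fin (w.length + 1)) :=
    fun i j hij => hmono.injective (congrArg Fin.val hij)
  simpa using Fintype.card_le_of_injective _ hinj

lemma maxDisjoint_mem {v : List A} (hv : v ≠ []) (w : List A) :
    maxDisjoint v w ∈ packings v w :=
  Nat.sSup_mem ⟨0, zero_mem_packings v w⟩ (packings_bddAbove hv w)

lemma le_maxDisjoint {v w : List A} (hv : v ≠ []) {m : ℕ} (h : m ∈ packings v w) :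
    m ≤ maxDisjoint v w :=
  le_csSup (packings_bddAbove hv w) h

lemma add_mem_packings {v a b : List A} {m₁ m₂ : ℕ}
    (h₁ : m₁ ∈ packings v a) (h₂ : m₂ ∈ packings v b) : m₁ + m₂ ∈ packings v (a ++ b) := by
  obtain ⟨sa, hsa, hoa⟩ := h₁
  obtain ⟨sb, hsb, hob⟩ := h₂
  refine ⟨fun i => if h : (i : ℕ) < m₁ then sa ⟨i, h⟩
    else a.length + sb ⟨i - m₁, by omega⟩, fun i => ?_, fun i j hij => ?_⟩
  · by_cases h : (i : ℕ) < m₁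
    · simpa only [dif_pos h] using (hsa _).append_right b
    · simpa only [dif_neg h] using (hsb _).append_left a
  · have hij' : (i : ℕ) < j := hij
    by_cases hi : (i : ℕ) < m₁ <;> by_cases hj : (j : ℕ) < m₁ <;>
      simp only [dif_pos, dif_neg, hi, hj, not_false_eq_true]
    · exact hoa ⟨i, hi⟩ ⟨j, hj⟩ hij
    · have := (hsa ⟨i, hi⟩).1
      omega
    · omega
    · have := hob ⟨i - m₁, by omega⟩ ⟨j - m₁, by omega⟩ (Fin.mk_lt_mk.mpr (by omega))
      omega

lemma one_mem_packings {v w : List A} {i : ℕ} (h : OccursIn v w i) : 1 ∈ packings v w :=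
  ⟨fun _ => i, fun _ => h, fun i j hij => absurd (Subsingleton.elim i j) hij.ne⟩

/-- `l_v(w)` of the paper. -/
noncomputable def ell (v w : List A) : ℕ := maxDisjoint v w * v.length

lemma ell_append (v a b : List A) : ell v a + ell v b ≤ ell v (a ++ b) := by
  rcases eq_or_ne v [] with rfl | hv
  · simp [ell]
  rw [ell, ell, ell, ← add_mul]
  exact Nat.mul_le_mul_right _
    (le_maxDisjoint hv (add_mem_packings (maxDisjoint_mem hv a) (maxDisjoint_mem hv b)))

lemma ell_le_of_infix (v : List A) {u w : List A} (h : u <:+: w) : ell v u ≤ ell v w := by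
  obtain ⟨s, t, rfl⟩ := h
  have := ell_append v s u
  have := ell_append v (s ++ u) t
  omega

lemma length_le_ell_of_infix {v w : List A} (h : v <:+: w) : v.length ≤ ell v w := by
  rcases eq_or_ne v [] with rfl | hv
  · simp
  have hself : v.length ≤ ell v v :=
    le_mul_of_one_le_left (Nat.zero_le _)
      (le_maxDisjoint hv (one_mem_packings (occursIn_iff.mpr ⟨[], [], by simp, rfl⟩)))
  exact hself.trans (ell_le_of_infix v h)

lemma ell_eq_zero_of_not_infix {v w : List A} (h : ¬ v <:+: w) : ell v w = 0 := by
  have hv : v ≠ [] := by rintro rfl; exact h List.nil_infix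
  obtain ⟨s, hs, -⟩ := maxDisjoint_mem hv w
  rw [ell, Nat.mul_eq_zero]
  left
  by_contra hm
  exact h (infix_iff_exists_occursIn.mpr ⟨_, hs ⟨0, Nat.pos_of_ne_zero hm⟩⟩)

lemma sum_ell_le_ell_flatten (v : List A) (ps : List (List A)) :
    (ps.map (ell v)).sum ≤ ell v ps.flatten := by
  induction ps with
  | nil => simp
  | cons p ps ih =>
    simp only [List.map_cons, List.sum_cons, List.flatten_cons]
    exact (Nat.add_le_add_left ih _).trans (ell_append v p ps.flatten)

def block (z : List A) (n i : ℕ) : List A := (z.drop (i * n)).take n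

lemma block_infix (z : List A) (n i : ℕ) : block z n i <:+: z :=
  (List.take_prefix _ _).isInfix.trans (List.drop_suffix _ _).isInfix

lemma length_block {z : List A} {n i : ℕ} (h : (i + 1) * n ≤ z.length) :
    (block z n i).length = n := by
  simp only [block, List.length_take, List.length_drop]
  rw [add_mul, one_mul] at h
  omega

lemma sum_ell_block_le (v z : List A) (n : ℕ) {q : ℕ} (hq : q * n ≤ z.length) :
    ∑ i ∈ Finset.range q, ell v (block z n i) ≤ ell v z := by
  suffices ∑ i ∈ Finset.range q, ell v (block z n i) ≤ ell v (z.take (q * n)) from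
    this.trans (ell_le_of_infix v (List.take_prefix _ _).isInfix)
  induction q with
  | zero => simp
  | succ q ih =>
    rw [Finset.sum_range_succ, add_mul, one_mul, List.take_add]
    exact (Nat.add_le_add_right (ih (by nlinarith)) _).trans (ell_append v _ _)

lemma le_two_mul_div_mul {m n : ℕ} (hn : 0 < n) (hnm : n ≤ m) : m ≤ 2 * (m / n) * n := by
  have h₁ := Nat.lt_mul_div_succ m hn
  have h₂ : n ≤ m / n * n := Nat.le_mul_of_pos_left n (Nat.div_pos hnm hn)
  nlinarith

lemma exists_block_ell_mul_le (v : List A) {z : List A} {n : ℕ} (hn : 0 < n)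
    (hnz : n ≤ z.length) :
    ∃ i, (i + 1) * n ≤ z.length ∧ ell v (block z n i) * z.length ≤ 2 * n * ell v z := by
  set q := z.length / n
  have hq : 0 < q := Nat.div_pos hnz hn
  have hsum : ∑ i ∈ Finset.range q, ell v (block z n i) * q ≤ ∑ _i ∈ Finset.range q, ell v z := by
    rw [← Finset.sum_mul, Finset.sum_const, Finset.card_range, smul_eq_mul, mul_comm]
    exact Nat.mul_le_mul_left _ (sum_ell_block_le v z n (Nat.div_mul_le_self _ _))
  obtain ⟨i, hi, hle⟩ := Finset.exists_le_of_sum_le (Finset.nonempty_range_iff.mpr hq.ne') hsum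
  rw [Finset.mem_range] at hi
  refine ⟨i, (Nat.mul_le_mul_right n hi).trans (Nat.div_mul_le_self _ _), ?_⟩
  calc ell v (block z n i) * z.length ≤ ell v (block z n i) * (2 * q * n) :=
        Nat.mul_le_mul_left _ (le_two_mul_div_mul hn hnz)
    _ = 2 * n * (ell v (block z n i) * q) := by ring
    _ ≤ 2 * n * ell v z := Nat.mul_le_mul_left _ hle

lemma _root_.List.sum_map_finset_sum {ι κ : Type*} (l : List ι) (s : Finset κ) (g : κ → ι → ℕ) :
    (l.map fun p => ∑ j ∈ s, g j p).sum = ∑ j ∈ s, (l.map (g j)).sum := by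
  induction l <;> simp [Finset.sum_add_distrib, *]

noncomputable def uncoveredLength (V : Set (List A)) (ps : List (List A)) : ℕ :=
  (ps.map (Vᶜ.indicator List.length)).sum

noncomputable def coverDefect (V : Set (List A)) (w : List A) : ℕ :=
  sInf (uncoveredLength V '' {ps | ps.flatten = w})

lemma coverDefect_le {V : Set (List A)} {ps : List (List A)} {w : List A}
    (h : ps.flatten = w) : coverDefect V w ≤ uncoveredLength V ps :=
  Nat.sInf_le ⟨ps, h, rfl⟩

lemma exists_uncoveredLength_eq_coverDefect (V : Set (List A)) (w : List A) :
    ∃ ps : List (List A), ps.flatten = w ∧ uncoveredLength V ps = coverDefect V w :=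
  Nat.sInf_mem (s := uncoveredLength V '' {ps | ps.flatten = w}) ⟨_, [w], by simp, rfl⟩

lemma coverDefect_eq_zero {V : Set (List A)} {v : List A} (hv : v ∈ V) :
    coverDefect V v = 0 :=
  Nat.eq_zero_of_le_zero <|
    (coverDefect_le (ps := [v]) (by simp)).trans (by simp [uncoveredLength, hv])

lemma coverDefect_append_le (V : Set (List A)) (a b : List A) :
    coverDefect V (a ++ b) ≤ coverDefect V a + coverDefect V b := by
  obtain ⟨ps, rfl, hps⟩ := exists_uncoveredLength_eq_coverDefect V a
  obtain ⟨qs, rfl, hqs⟩ := exists_uncoveredLength_eq_coverDefect V b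
  rw [← hps, ← hqs]
  exact (coverDefect_le (ps := ps ++ qs) List.flatten_append).trans
    (by simp [uncoveredLength])

/-- A covered piece longer than `w` cannot occur in `w`, so only the first `K` words of the
family matter. -/
lemma length_le_coverDefect_add_sum_ell (vs : ℕ → List A) {w : List A} {K : ℕ}
    (hK : ∀ j, K ≤ j → w.length < (vs j).length) :
    w.length ≤ coverDefect (Set.range vs) w + ∑ j ∈ Finset.range K, ell (vs j) w := by
  obtain ⟨ps, rfl, hps⟩ := exists_uncoveredLength_eq_coverDefect (Set.range vs) w
  have hpiece : ∀ p ∈ ps, p.length ≤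
      (Set.range vs)ᶜ.indicator List.length p + ∑ j ∈ Finset.range K, ell (vs j) p := by
    intro p hp
    by_cases hpV : p ∈ Set.range vs
    · obtain ⟨j, rfl⟩ := hpV
      have hj : j < K := by
        by_contra hj
        have := hK j (not_lt.mp hj)
        have := (List.infix_of_mem_flatten hp).length_le
        omega
      exact (length_le_ell_of_infix (List.infix_refl _)).trans
        ((Finset.single_le_sum (f := fun i => ell (vs i) (vs j)) (fun _ _ => Nat.zero_le _)
          (Finset.mem_range.mpr hj)).trans (Nat.le_add_left _ _))
    · simp [hpV]
  calc ps.flatten.length = (ps.map List.length).sum := List.length_flatten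
    _ ≤ (ps.map fun p => (Set.range vs)ᶜ.indicator List.length p +
          ∑ j ∈ Finset.range K, ell (vs j) p).sum := List.sum_le_sum hpiece
    _ = uncoveredLength (Set.range vs) ps + ∑ j ∈ Finset.range K, (ps.map (ell (vs j))).sum := by
      rw [List.sum_map_add, uncoveredLength]
      exact congrArg _ (List.sum_map_finset_sum ps _ _)
    _ ≤ _ := by
      rw [hps]
      exact Nat.add_le_add_left (Finset.sum_le_sum fun j _ => sum_ell_le_ell_flatten _ _) _

section Words

variable {W : Set (List A)}

lemma mem_wordsFilter {S : Set (List A)} :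
    S ∈ wordsFilter W ↔ ∃ L : ℕ, ∀ w ∈ W, L ≤ w.length → w ∈ S := by
  have hdir : Directed (· ≥ ·) fun L : ℕ => 𝓟 {w | w ∈ W ∧ L ≤ w.length} := fun a b =>
    ⟨max a b, by simp +contextual [Set.subset_def], by simp +contextual [Set.subset_def]⟩
  simp only [wordsFilter, Filter.mem_iInf_of_directed hdir, Filter.mem_principal,
    Set.subset_def, Set.mem_ofPred_eq, and_imp]

lemma wordsFilter_neBot (hlen : ∀ n, ∃ w ∈ W, w.length = n) : (wordsFilter W).NeBot :=
  Filter.frequently_true_iff_neBot _ |>.mp fun h => by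
    obtain ⟨L, hL⟩ := mem_wordsFilter.mp h
    obtain ⟨w, hw, rfl⟩ := hlen L
    exact hL w hw le_rfl trivial

lemma le_wordSup_s7 [Finite A] (F : List A → ℝ) {u : List A} (hu : u ∈ W) :
    F u / u.length ≤ wordSup W F u.length :=
  le_csSup (((List.finite_length_eq A u.length).subset fun _ h => h.2).image _).bddAbove
    ⟨u, ⟨hu, rfl⟩, rfl⟩

/-- The length of the longest word of `W` avoiding `v` (junk value `0` if it is unbounded). -/
noncomputable def freeLen (W : Set (List A)) (v : List A) : ℕ :=
  sSup {n | ∃ z ∈ W, z.length = n ∧ ¬ v <:+: z}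

lemma freeLen_bddAbove {v : List A} (hR : ∃ R, ∀ w ∈ W, R ≤ w.length → v <:+: w) :
    BddAbove {n | ∃ z ∈ W, z.length = n ∧ ¬ v <:+: z} := by
  obtain ⟨R, hR⟩ := hR
  exact ⟨R, fun n ⟨z, hz, hzn, hfree⟩ => not_lt.mp fun h => hfree (hR z hz (by omega))⟩

lemma infix_of_freeLen_lt {v w : List A} (hR : ∃ R, ∀ w ∈ W, R ≤ w.length → v <:+: w)
    (hw : w ∈ W) (hlen : freeLen W v < w.length) : v <:+: w := by
  by_contra hfree
  exact (le_csSup (freeLen_bddAbove hR) ⟨w, hw, rfl, hfree⟩).not_gt hlen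

lemma exists_length_eq_freeLen {v : List A} (hR : ∃ R, ∀ w ∈ W, R ≤ w.length → v <:+: w)
    (hnil : [] ∈ W) (hv : v ≠ []) : ∃ z ∈ W, z.length = freeLen W v ∧ ¬ v <:+: z :=
  Nat.sSup_mem (s := {n | ∃ z ∈ W, z.length = n ∧ ¬ v <:+: z})
    ⟨0, [], hnil, rfl, fun h => hv (List.eq_nil_of_infix_nil h)⟩ (freeLen_bddAbove hR)

/-- If every word of length `L` contains `v`, then a word of length `≥ L` splits into
`⌊|w|/L⌋ ≥ |w|/(2L)` blocks each containing `v`. -/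
lemma le_nu (hfac : ∀ w ∈ W, ∀ u, u <:+: w → u ∈ W) {v : List A} {L : ℕ} (hL : 0 < L)
    (hocc : ∀ w ∈ W, w.length = L → v <:+: w) :
    (((v.length / (2 * L) : ℝ)) : EReal) ≤ nu W v := by
  refine Filter.le_liminf_of_le (by isBoundedDefault) (mem_wordsFilter.mpr ⟨L, fun w hw hLw => ?_⟩)
  set q := w.length / L
  have hblocks : q * v.length ≤ ell v w := by
    calc q * v.length = ∑ _i ∈ Finset.range q, v.length := by simp
      _ ≤ ∑ i ∈ Finset.range q, ell v (block w L i) := Finset.sum_le_sum fun i hi =>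
          length_le_ell_of_infix <| hocc _ (hfac w hw _ (block_infix w L i)) <|
            length_block ((Nat.mul_le_mul_right L (Finset.mem_range.mp hi)).trans
              (Nat.div_mul_le_self _ _))
      _ ≤ ell v w := sum_ell_block_le v w L (Nat.div_mul_le_self _ _)
  have hw2 : (w.length : ℝ) ≤ 2 * q * L := by exact_mod_cast le_two_mul_div_mul hL hLw
  have hwpos : (0 : ℝ) < w.length := by exact_mod_cast hL.trans_le hLw
  have hLpos : (0 : ℝ) < L := by exact_mod_cast hL
  rw [Set.mem_ofPred_eq, EReal.coe_le_coe_iff, div_le_div_iff₀ (by positivity) hwpos]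
  calc (v.length : ℝ) * w.length ≤ v.length * (2 * q * L) := by gcongr
    _ = 2 * L * (q * v.length : ℕ) := by push_cast; ring
    _ ≤ (maxDisjoint v w * v.length : ℕ) * (2 * L) := by
      rw [mul_comm]
      exact mul_le_mul_of_nonneg_right (by exact_mod_cast hblocks) (by positivity)

end Words

section UniformErgodic

variable {W : Set (List A)}

lemma isSubadditive_neg_ell (v : List A) : IsSubadditive W fun w => -(ell v w : ℝ) :=
  fun a b _ _ _ => by
    have : (ell v a + ell v b : ℝ) ≤ ell v (a ++ b) := by exact_mod_cast ell_append v a b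
    linarith

lemma isSubadditive_coverDefect (V : Set (List A)) :
    IsSubadditive W fun w => (coverDefect V w : ℝ) :=
  fun a b _ _ _ => by dsimp only; exact_mod_cast coverDefect_append_le V a b

lemma SET.tendsto_nu (hSET : SET W) [(wordsFilter W).NeBot] (v : List A) :
    Tendsto (fun w => ((ell v w / w.length : ℝ) : EReal)) (wordsFilter W) (𝓝 (nu W v)) := by
  have h := (hSET _ (isSubadditive_neg_ell v)).neg
  simp only [← EReal.coe_neg, neg_div, neg_neg] at h
  rw [← h.liminf_eq] at h
  exact h

lemma SET.exists_ell_le (hSET : SET W) [(wordsFilter W).NeBot] {v : List A} {C : ℝ}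
    (hC : nu W v < C) : ∃ M, ∀ w ∈ W, M ≤ w.length → (ell v w : ℝ) ≤ C * w.length := by
  obtain ⟨M, hM⟩ := mem_wordsFilter.mp (hSET.tendsto_nu v (Iio_mem_nhds hC))
  refine ⟨max M 1, fun w hw hlen => ?_⟩
  have hpos : (0 : ℝ) < w.length := by exact_mod_cast (le_of_max_le_right hlen)
  have := EReal.coe_lt_coe_iff.mp (hM w hw (le_of_max_le_left hlen))
  exact ((div_lt_iff₀ hpos).mp this).le

lemma SET.exists_lt_div [Finite A] (hSET : SET W) {F : List A → ℝ} (hF : IsSubadditive W F)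
    {a b : ℝ} (hba : b < a) (ha : ∀ n, 1 ≤ n → ∃ u ∈ W, u.length = n ∧ a * n ≤ F u) :
    ∃ L, ∀ w ∈ W, L ≤ w.length → b < F w / w.length := by
  have hinf : (a : EReal) ≤ ⨅ n : {n : ℕ // 1 ≤ n}, ((wordSup W F n.1 : ℝ) : EReal) := by
    refine le_iInf fun ⟨n, hn⟩ => ?_
    obtain ⟨u, hu, rfl, hau⟩ := ha n hn
    have hpos : (0 : ℝ) < u.length := by exact_mod_cast hn
    exact EReal.coe_le_coe_iff.mpr <|
      ((le_div_iff₀ hpos).mpr hau).trans (le_wordSup_s7 F hu)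
  obtain ⟨L, hL⟩ := mem_wordsFilter.mp
    (hSET F hF (Ioi_mem_nhds ((EReal.coe_lt_coe_iff.mpr hba).trans_le hinf)))
  exact ⟨L, fun w hw hlen => EReal.coe_lt_coe_iff.mp (hL w hw hlen)⟩

end UniformErgodic

section CoveringSequence

variable {W : Set (List A)} {vs : ℕ → List A} {f : ℕ → ℕ} {c : ℕ → ℝ}

/-- For `f (k - 1) < n ≤ f k`, a block of length `n` of a long `vs k`-free word has small
`l_{vs j}` for every `j < k`: for `j < k - 1` because `n` is already past the threshold of
`vs j`, and for `j = k - 1` by averaging over the blocks. -/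
lemma exists_word_ell_le (hfac : ∀ w ∈ W, ∀ u, u <:+: w → u ∈ W) (hf : Monotone f)
    (hc : ∀ k, 0 ≤ c k) (hfree : ∀ k, ∃ z ∈ W, z.length = f k ∧ ¬ vs k <:+: z)
    (hunif : ∀ k, ∀ w ∈ W, f (k + 1) ≤ w.length → (ell (vs k) w : ℝ) ≤ c k * w.length)
    {k n : ℕ} (hn : 0 < n) (hnk : n ≤ f k) (hkn : ∀ j < k, f j < n) :
    ∃ u ∈ W, u.length = n ∧ ¬ vs k <:+: u ∧ ∀ j < k, (ell (vs j) u : ℝ) ≤ 2 * c j * n := by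
  obtain ⟨z, hzW, hzlen, hzfree⟩ := hfree k
  obtain ⟨i, hi, hblock⟩ := exists_block_ell_mul_le (vs (k - 1)) hn (hzlen ▸ hnk)
  have huW : block z n i ∈ W := hfac z hzW _ (block_infix z n i)
  refine ⟨block z n i, huW, length_block hi,
    fun h => hzfree (h.trans (block_infix z n i)), fun j hj => ?_⟩
  rcases Nat.lt_or_ge (j + 1) k with hjk | hjk
  · have hthreshold : f (j + 1) ≤ (block z n i).length := by
      rw [length_block hi]
      exact (hf (Nat.le_sub_one_of_lt hjk)).trans (hkn (k - 1) (by omega)).le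
    calc (ell (vs j) (block z n i) : ℝ) ≤ c j * n := by
          simpa [length_block hi] using hunif j _ huW hthreshold
      _ ≤ 2 * c j * n := by nlinarith [hc j]
  · obtain rfl : k = j + 1 := by omega
    have hz : (ell (vs j) z : ℝ) ≤ c j * z.length := hunif j z hzW hzlen.ge
    have hzpos : (0 : ℝ) < z.length := by exact_mod_cast hn.trans_le (hzlen ▸ hnk)
    have hblock' : (ell (vs j) (block z n i) : ℝ) * z.length ≤ 2 * n * ell (vs j) z := by
      exact_mod_cast hblock
    refine le_of_mul_le_mul_right ?_ hzpos
    nlinarith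

lemma exists_half_le_coverDefect (hfac : ∀ w ∈ W, ∀ u, u <:+: w → u ∈ W) (hf : StrictMono f)
    (hc : ∀ k, 0 ≤ c k) (hcsum : ∀ K, ∑ k ∈ Finset.range K, c k ≤ 1 / 4)
    (hfree : ∀ k, ∃ z ∈ W, z.length = f k ∧ ¬ vs k <:+: z)
    (hlong : ∀ k, f k < (vs (k + 1)).length)
    (hunif : ∀ k, ∀ w ∈ W, f (k + 1) ≤ w.length → (ell (vs k) w : ℝ) ≤ c k * w.length)
    {n : ℕ} (hn : 0 < n) : ∃ u ∈ W, u.length = n ∧ (n : ℝ) / 2 ≤ coverDefect (Set.range vs) u := by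
  classical
  have hex : ∃ k, n ≤ f k := ⟨n, hf.id_le n⟩
  obtain ⟨k, hnk, hkn⟩ : ∃ k, n ≤ f k ∧ ∀ j < k, f j < n :=
    ⟨Nat.find hex, Nat.find_spec hex, fun j hj => not_le.mp (Nat.find_min hex hj)⟩
  obtain ⟨u, huW, rfl, hufree, hell⟩ :=
    exists_word_ell_le hfac hf.monotone hc hfree hunif hn hnk hkn
  refine ⟨u, huW, rfl, ?_⟩
  have hK : ∀ j, k + 1 ≤ j → u.length < (vs j).length := fun j hj => by
    obtain ⟨j, rfl⟩ := Nat.exists_eq_add_of_le' (Nat.one_le_of_lt hj)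
    exact hnk.trans_lt ((hf.monotone (by omega)).trans_lt (hlong j))
  have hcover : (u.length : ℝ) ≤ coverDefect (Set.range vs) u +
      ∑ j ∈ Finset.range (k + 1), (ell (vs j) u : ℝ) := by
    exact_mod_cast length_le_coverDefect_add_sum_ell vs hK
  have hsum : ∑ j ∈ Finset.range (k + 1), (ell (vs j) u : ℝ) ≤ u.length / 2 :=
    calc ∑ j ∈ Finset.range (k + 1), (ell (vs j) u : ℝ)
        = ∑ j ∈ Finset.range k, (ell (vs j) u : ℝ) := by
          simp [Finset.sum_range_succ, ell_eq_zero_of_not_infix hufree]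
      _ ≤ ∑ j ∈ Finset.range k, 2 * c j * u.length :=
          Finset.sum_le_sum fun j hj => hell j (Finset.mem_range.mp hj)
      _ = 2 * u.length * ∑ j ∈ Finset.range k, c j := by
          rw [Finset.mul_sum]; exact Finset.sum_congr rfl fun _ _ => by ring
      _ ≤ u.length / 2 := by nlinarith [hcsum k, (Nat.cast_nonneg u.length : (0 : ℝ) ≤ _)]
  linarith

end CoveringSequence

/-- Without (PQ), words of small `ν` are long (finitely many short words have positive `ν`)
and have a long free length compared to their own length (by `le_nu`). -/
lemma exists_long_word_ell_le_of_not_PQ [Finite A] {W : Set (List A)} (hfac : ∀ w ∈ W, ∀ u, u <:+: w → u ∈ W)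
    (hrec : ∀ v ∈ W, ∃ R, ∀ w ∈ W, R ≤ w.length → v <:+: w) [(wordsFilter W).NeBot]
    (hSET : SET W) (hPQ : ¬ PQ W) (T : ℕ) {C : ℝ} (hC : 0 < C) :
    ∃ v ∈ W, T < v.length ∧ v.length ≤ freeLen W v ∧
      ∃ M, ∀ w ∈ W, M ≤ w.length → (ell v w : ℝ) ≤ C * w.length := by
  obtain ⟨R, hR⟩ := (((List.finite_length_le A T).subset
    fun v (hv : v ∈ W ∧ v.length ≤ T) => hv.2).image (freeLen W)).bddAbove
  set C' := min (min C (1 / 4)) (1 / (2 * (R + 1)))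
  have hC' : 0 < C' := by positivity
  simp only [PQ, not_exists, not_and, not_forall, not_le] at hPQ
  obtain ⟨v, hvW, hv, hnu⟩ := hPQ C' hC'
  have hlow := (le_nu hfac (L := freeLen W v + 1) (Nat.succ_pos _)
    fun w hw hlen => infix_of_freeLen_lt (hrec v hvW) hw (by omega)).trans_lt hnu
  rw [EReal.coe_lt_coe_iff, div_lt_iff₀ (by positivity)] at hlow
  push_cast at hlow
  have hv1 : (1 : ℝ) ≤ v.length := by exact_mod_cast List.length_pos_iff.mpr hv
  refine ⟨v, hvW, ?_, ?_, hSET.exists_ell_le (hnu.trans_le (EReal.coe_le_coe_iff.mpr ?_))⟩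
  · by_contra! hshort
    have hfree : (freeLen W v : ℝ) ≤ R := by exact_mod_cast hR ⟨v, ⟨hvW, hshort⟩, rfl⟩
    have : C' * (2 * (R + 1)) ≤ 1 := by
      rw [← le_div_iff₀ (by positivity)]
      exact (min_le_right _ _).trans (by rw [one_div])
    nlinarith
  · have : C' ≤ 1 / 4 := (min_le_left _ _).trans (min_le_right _ _)
    have : (v.length : ℝ) < freeLen W v + 1 := by nlinarith
    exact_mod_cast Nat.lt_succ_iff.mp (by exact_mod_cast this)
  · exact (min_le_left _ _).trans (min_le_left _ _)

theorem PQ_of_SET [Finite A] {W : Set (List A)} (hfac : ∀ w ∈ W, ∀ u, u <:+: w → u ∈ W)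
    (hrec : ∀ v ∈ W, ∃ R, ∀ w ∈ W, R ≤ w.length → v <:+: w)
    (hlen : ∀ n, ∃ w ∈ W, w.length = n) (hSET : SET W) : PQ W := by
  by_contra hPQ
  have := wordsFilter_neBot hlen
  have hnil : [] ∈ W := by
    obtain ⟨w, hw, hw0⟩ := hlen 0
    rwa [List.length_eq_zero_iff.mp hw0] at hw
  set c : ℕ → ℝ := fun k => (1 / 2) ^ k / 8
  have hcsum : ∀ K, ∑ k ∈ Finset.range K, c k ≤ 1 / 4 := fun K => by
    rw [← Finset.sum_div]
    linarith [sum_geometric_two_le K]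
  choose next hnextW hnextT hnextfree M hM using fun k T =>
    exists_long_word_ell_le_of_not_PQ hfac hrec hSET hPQ T (show 0 < c k by positivity)
  let T : ℕ → ℕ := fun k => Nat.rec 0 (fun k t => max (freeLen W (next k t)) (M k t)) k
  set vs := fun k => next k (T k)
  have hlong : ∀ k, freeLen W (vs k) < (vs (k + 1)).length := fun k =>
    (le_max_left _ _).trans_lt (hnextT (k + 1) (T (k + 1)))
  have hf : StrictMono fun k => freeLen W (vs k) :=
    strictMono_nat_of_lt_succ fun k => (hlong k).trans_le (hnextfree _ _)
  have hunif : ∀ k, ∀ w ∈ W, freeLen W (vs (k + 1)) ≤ w.length →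
      (ell (vs k) w : ℝ) ≤ c k * w.length := fun k w hw hlen =>
    hM k (T k) w hw <| ((le_max_right _ _).trans_lt (hnextT (k + 1) (T (k + 1)))).le.trans
      ((hnextfree _ _).trans hlen)
  have hfree : ∀ k, ∃ z ∈ W, z.length = freeLen W (vs k) ∧ ¬ vs k <:+: z := fun k =>
    exists_length_eq_freeLen (hrec _ (hnextW _ _)) hnil
      (List.ne_nil_of_length_pos (Nat.zero_lt_of_lt (hnextT k (T k))))
  obtain ⟨L, hL⟩ := hSET.exists_lt_div (isSubadditive_coverDefect (Set.range vs))
    (by norm_num : (0 : ℝ) < 1 / 2) fun n hn => by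
      simpa [div_eq_inv_mul] using
        exists_half_le_coverDefect hfac hf (fun k => by positivity) hcsum hfree hlong hunif hn
  have := hL (vs (L + 1)) (hnextW _ _) ((hf.id_le L).trans (hlong L).le)
  simp [coverDefect_eq_zero (Set.mem_range_self (L + 1))] at this

section Subshift

variable {Ω : Set (ℤ → A)}

lemma occursAt_iff_getElem {w : List A} {ω : ℤ → A} {k : ℤ} :
    OccursAt w ω k ↔ ∀ (j : ℕ) (hj : j < w.length), ω (k + j) = w[j] :=
  ⟨fun h j hj => h ⟨j, hj⟩, fun h i => h i i.2⟩

lemma mem_words_of_infix {v w : List A} (hw : w ∈ words Ω) (h : v <:+: w) : v ∈ words Ω := by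
  obtain ⟨ω, hω, k, hk⟩ := hw
  obtain ⟨s, t, rfl⟩ := h
  refine ⟨ω, hω, k + s.length, occursAt_iff_getElem.mpr fun j hj => ?_⟩
  have := occursAt_iff_getElem.mp hk (s.length + j) (by simp; omega)
  simpa [List.getElem_append_right, List.getElem_append_left hj, add_assoc] using this

lemma exists_mem_words_length (hne : Ω.Nonempty) (n : ℕ) : ∃ w ∈ words Ω, w.length = n := by
  obtain ⟨ω, hω⟩ := hne
  exact ⟨List.ofFn fun i : Fin n => ω i, ⟨ω, hω, 0, fun i => by simp⟩, by simp⟩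

lemma OccursAt.of_shiftZ {v : List A} {ω : ℤ → A} {n k : ℤ} (h : OccursAt v (shiftZ n ω) k) :
    OccursAt v ω (k + n) := fun i => by
  rw [← h i, shiftZ, add_right_comm]

lemma infix_of_occursAt {v w : List A} {ω : ℤ → A} {k : ℤ} {i : ℕ} (hw : OccursAt w ω k)
    (hv : OccursAt v ω (k + i)) (hi : i + v.length ≤ w.length) : v <:+: w := by
  have : (w.drop i).take v.length = v := List.ext_getElem (by simp; omega) fun j h₁ h₂ => by
    rw [List.getElem_take, List.getElem_drop, ← occursAt_iff_getElem.mp hw _ (by omega),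
      ← occursAt_iff_getElem.mp hv j h₂]
    push_cast
    ring_nf
  exact this ▸ (List.take_prefix _ _).isInfix.trans (List.drop_suffix _ _).isInfix

variable [TopologicalSpace A]

lemma shiftZ_mem (hΩ : IsSubshift Ω) (n : ℤ) {ω : ℤ → A} (hω : ω ∈ Ω) : shiftZ n ω ∈ Ω := by
  induction n using Int.induction_on with
  | zero => rwa [show shiftZ 0 ω = ω from funext fun k => by simp [shiftZ]]
  | succ m ih =>
    rw [← hΩ.2]
    exact ⟨_, ih, funext fun k => by simp only [shift, shiftZ]; ring_nf⟩
  | pred m ih =>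
    rw [← hΩ.2] at ih
    obtain ⟨σ, hσ, hσω⟩ := ih
    convert hσ using 1
    funext k
    have := congrFun hσω (k - 1)
    simp only [shift, shiftZ, sub_add_cancel] at this
    rw [shiftZ, this]
    ring_nf

lemma isOpen_setOf_occursAt [DiscreteTopology A] (v : List A) (m : ℤ) :
    IsOpen {ρ : ℤ → A | OccursAt v ρ m} := by
  simp only [OccursAt, Set.ofPred_forall]
  exact isOpen_iInter_of_finite fun i =>
    (continuous_apply (A := fun _ : ℤ => A) (m + (i : ℕ))).isOpen_preimage {v.get i}
      (isOpen_discrete _)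

/-- By minimality every point of `Ω` sees `v` somewhere, by compactness within a bounded window
around the origin. -/
lemma exists_forall_infix_of_isMinimal [Finite A] [DiscreteTopology A] (hΩ : IsSubshift Ω)
    (hmin : IsMinimal Ω) {v : List A} (hv : v ∈ words Ω) :
    ∃ R, ∀ w ∈ words Ω, R ≤ w.length → v <:+: w := by
  obtain ⟨ω₀, hω₀, k₀, hk₀⟩ := hv
  have hcover : Ω ⊆ ⋃ m : ℤ, {ρ | OccursAt v ρ m} := fun ρ hρ => by
    obtain ⟨σ, hσ, n, rfl⟩ :=
      mem_closure_iff.mp (hmin ρ hρ hω₀) _ (isOpen_setOf_occursAt v k₀) hk₀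
    exact Set.mem_iUnion.mpr ⟨k₀ + n, hσ.of_shiftZ⟩
  obtain ⟨t, ht⟩ := hΩ.1.isCompact.elim_finite_subcover _ (isOpen_setOf_occursAt v) hcover
  refine ⟨2 * t.sup Int.natAbs + v.length, fun w ⟨ω, hω, k, hk⟩ hlen => ?_⟩
  obtain ⟨m, hmt, hm⟩ := Set.mem_iUnion₂.mp (ht (shiftZ_mem hΩ (k + t.sup Int.natAbs) hω))
  have hmN : m.natAbs ≤ t.sup Int.natAbs := Finset.le_sup hmt
  refine infix_of_occursAt hk (i := (m + t.sup Int.natAbs).toNat) ?_ (by omega)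
  convert hm.of_shiftZ using 1
  omega

end Subshift

theorem SET_implies_PQ_general
    {A : Type*} [Fintype A] [TopologicalSpace A] [DiscreteTopology A]
    (Ω : Set (ℤ → A)) (hΩ : IsSubshift Ω) (hne : Ω.Nonempty) (hmin : IsMinimal Ω)
    (hSET : SET (words Ω)) :
    PQ (words Ω) :=
  PQ_of_SET (fun _ hw _ h => mem_words_of_infix hw h)
    (fun _ hv => exists_forall_infix_of_isMinimal hΩ hmin hv) (exists_mem_words_length hne) hSET

/-- for a minimal subshift, the uniform subadditive ergodic theorem (SET)
implies (PQ). -/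
theorem SET_implies_PQ
    {A : Type*} [Fintype A] [Nonempty A] [TopologicalSpace A] [DiscreteTopology A]
    (Ω : Set (ℤ → A)) (hΩ : IsSubshift Ω) (hne : Ω.Nonempty) (hmin : IsMinimal Ω)
    (hSET : SET (words Ω)) :
    PQ (words Ω) :=
  SET_implies_PQ_general Ω hΩ hne hmin hSET

end SubshiftErgodic
end
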